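/- arXiv:1511.00137 — 8 statements merged into one kernel-verified Lean document; each statement's English description precedes it below -/
import Mathlib

section
/- Let u ∈ (0,1), let x_0, …, x_n be real numbers, let 0 ≤ k ≤ n and 0 ≤ m ≤ n, and assume (2n+1)·u < 1. Suppose: (i) for every pair of nonnegative integers (m₁, m₂) with m₁+m₂ = m, k−m₁ ≥ 0 and n−k−m₂ ≥ 0, there are real numbers Ŝ^L(m₁) = Σ_{I ⊆ {0,…,k−1}, |I| = k−m₁} (∏_{i∈I} x_i)(1+θ_I) with each |θ_I| ≤ γ_{2(k−1)−m₁}, and Ŝ^R(m₂) = Σ_{J ⊆ {k+1,…,n}, |J| = n−k−m₂} (∏_{j∈J} x_j)(1+θ_J) with each |θ_J| ≤ γ_{2(n−k−1)−m₂}; and (ii) ŵ' = (−1)^{n−m} Σ_{(m₁,m₂)} Ŝ^L(m₁)·Ŝ^R(m₂)·(1+φ_{m₁,m₂}) for some numbers φ with |φ_{m₁,m₂}| ≤ γ_{m+1}. Then there exist real numbers θ_I, indexed by the (n−m)-element subsets I of {0,…,n}\{k}, with |θ_I| ≤ γ_{2n+1}, such that ŵ' = (−1)^{n−m} Σ_{I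 ⊆ {0,…,n}\{k}, |I| = n−m} (∏_{i∈I} x_i)·(1+θ_I). -/
/-- `γ_k = k·u/(1 − k·u)`, the standard bound for the accumulated relative error of
`k` floating point operations with unit roundoff `u`. -/
noncomputable def gam (u : ℝ) (k : ℕ) : ℝ := k * u / (1 - k * u)

/-!
Expanding `SL m₁ · SR (m − m₁)` gives one term per pair `(I, J)` with `I ⊆ {0,…,k−1}`,
`J ⊆ {k+1,…,n}` and `#I + #J = n − m`, and these pairs are exactly the splittings
`(K ∩ {0,…,k−1}, K ∖ {0,…,k−1})` of the `(n − m)`-subsets `K` of `{0,…,n} ∖ {k}`. Each term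
carries three relative errors, of orders `2(k−1) − m₁`, `2(n−k−1) − m₂` and `m + 1`; they merge
into one of order at most `2n + 1` because `(1 + γ_a)(1 + γ_b) ≤ 1 + γ_{a+b}`.
-/

section Gamma

variable {u : ℝ}

lemma one_add_gam {k : ℕ} (hk : (k : ℝ) * u < 1) : 1 + gam u k = (1 - k * u)⁻¹ := by
  unfold gam
  field_simp [(sub_pos.2 hk).ne']
  ring

lemma gam_nonneg (hu : 0 ≤ u) {k : ℕ} (hk : (k : ℝ) * u < 1) : 0 ≤ gam u k :=
  div_nonneg (by positivity) (sub_pos.2 hk).le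

lemma cast_mul_lt_one_of_le (hu : 0 ≤ u) {a N : ℕ} (haN : a ≤ N) (hN : (N : ℝ) * u < 1) :
    (a : ℝ) * u < 1 :=
  (mul_le_mul_of_nonneg_right (Nat.cast_le.2 haN) hu).trans_lt hN

lemma abs_one_add_mul_one_add_sub_one_le_gam (hu : 0 ≤ u) {a b N : ℕ} (habN : a + b ≤ N)
    (hN : (N : ℝ) * u < 1) {s t : ℝ} (hs : |s| ≤ gam u a) (ht : |t| ≤ gam u b) :
    |(1 + s) * (1 + t) - 1| ≤ gam u N := by
  have ha := cast_mul_lt_one_of_le hu (a.le_add_right b |>.trans habN) hN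
  have hb := cast_mul_lt_one_of_le hu (b.le_add_left a |>.trans habN) hN
  have hfactor : (1 + gam u a) * (1 + gam u b) ≤ 1 + gam u N := by
    have hab : ((a : ℝ) + b) * u ≤ N * u :=
      mul_le_mul_of_nonneg_right (by exact_mod_cast habN) hu
    rw [one_add_gam ha, one_add_gam hb, one_add_gam hN, ← mul_inv]
    refine inv_anti₀ (sub_pos.2 hN) ?_
    nlinarith [mul_nonneg (mul_nonneg (Nat.cast_nonneg a) (Nat.cast_nonneg b)) (mul_nonneg hu hu)]
  calc |(1 + s) * (1 + t) - 1| = |s + t + s * t| := by ring_nf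
    _ ≤ |s| + |t| + |s| * |t| := by
      rw [← abs_mul]; exact (abs_add_le _ _).trans (add_le_add_left (abs_add_le _ _) _)
    _ ≤ gam u a + gam u b + gam u a * gam u b := by
      gcongr
      exact gam_nonneg hu ha
    _ ≤ gam u N := by linarith

lemma abs_one_add_mul_one_add_mul_one_add_sub_one_le_gam (hu : 0 ≤ u) {a b c N : ℕ}
    (habcN : a + b + c ≤ N) (hN : (N : ℝ) * u < 1) {r s t : ℝ} (hr : |r| ≤ gam u a)
    (hs : |s| ≤ gam u b) (ht : |t| ≤ gam u c) :
    |(1 + r) * (1 + s) * (1 + t) - 1| ≤ gam u N := by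
  have hrs := abs_one_add_mul_one_add_sub_one_le_gam hu le_rfl
    (cast_mul_lt_one_of_le hu ((Nat.le_add_right _ c).trans habcN) hN) hr hs
  simpa using abs_one_add_mul_one_add_sub_one_le_gam hu habcN hN hrs ht

end Gamma

namespace Finset

lemma sum_mul_mul_sum_mul_mul {ι κ R : Type*} [CommSemiring R] (S : Finset ι) (T : Finset κ)
    (a s : ι → R) (b t : κ → R) (c : R) :
    (∑ i ∈ S, a i * s i) * (∑ j ∈ T, b j * t j) * c =
      ∑ i ∈ S, ∑ j ∈ T, a i * b j * (s i * t j * c) := by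
  rw [sum_mul_sum, sum_mul]
  refine sum_congr rfl fun _ _ => ?_
  rw [sum_mul]
  exact sum_congr rfl fun _ _ => by ring

variable {α M : Type*} [DecidableEq α] [AddCommMonoid M] {A B : Finset α}

lemma union_inter_eq_left_of_subset_of_disjoint {I J : Finset α} (hI : I ⊆ A)
    (hJ : Disjoint J A) : (I ∪ J) ∩ A = I := by
  rw [union_inter_distrib_right, inter_eq_left.2 hI, disjoint_iff_inter_eq_empty.1 hJ,
    union_empty]

lemma union_sdiff_eq_right_of_subset_of_disjoint {I J : Finset α} (hI : I ⊆ A)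
    (hJ : Disjoint J A) : (I ∪ J) \ A = J := by
  rw [union_sdiff_distrib, sdiff_eq_empty_iff_subset.2 hI, sdiff_eq_self_of_disjoint hJ,
    empty_union]

lemma sdiff_mem_powersetCard_sub_card_inter {K : Finset α} {r : ℕ}
    (hK : K ∈ (A ∪ B).powersetCard r) : K \ A ∈ B.powersetCard (r - #(K ∩ A)) := by
  obtain ⟨hKAB, rfl⟩ := mem_powersetCard.1 hK
  refine mem_powersetCard.2 ⟨fun x hx => ?_, ?_⟩
  · rw [mem_sdiff] at hx
    exact (mem_union.1 (hKAB hx.1)).resolve_left hx.2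
  · rw [← card_inter_add_card_sdiff K A, Nat.add_sub_cancel_left]

theorem sum_powersetCard_union (hAB : Disjoint A B) (r : ℕ) (f : Finset α → Finset α → M) :
    ∑ K ∈ (A ∪ B).powersetCard r, f (K ∩ A) (K \ A) =
      ∑ i ∈ range (r + 1), ∑ I ∈ A.powersetCard i, ∑ J ∈ B.powersetCard (r - i), f I J := by
  rw [← sum_fiberwise_of_maps_to (g := fun K => #(K ∩ A)) (t := range (r + 1))]
  · refine sum_congr rfl fun i hi => ?_
    rw [← sum_product']
    refine sum_nbij' (fun K => (K ∩ A, K \ A)) (fun p => p.1 ∪ p.2) ?_ ?_ ?_ ?_ (fun _ _ => rfl)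
    · rintro K hK
      obtain ⟨hKr, rfl⟩ := mem_filter.1 hK
      exact mem_product.2 ⟨mem_powersetCard.2 ⟨inter_subset_right, rfl⟩,
        sdiff_mem_powersetCard_sub_card_inter hKr⟩
    · rintro ⟨I, J⟩ hIJ
      simp only [mem_product, mem_powersetCard] at hIJ
      obtain ⟨⟨hIA, rfl⟩, hJB, hJ⟩ := hIJ
      have hJA : Disjoint J A := (hAB.mono_right hJB).symm
      simp only [mem_filter, mem_powersetCard]
      refine ⟨⟨union_subset_union hIA hJB, ?_⟩, ?_⟩
      · rw [card_union_of_disjoint (hJA.mono_right hIA).symm, hJ]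
        have := mem_range.1 hi
        omega
      · rw [union_inter_eq_left_of_subset_of_disjoint hIA hJA]
    · intro K _
      rw [union_comm]; exact sdiff_union_inter K A
    · rintro ⟨I, J⟩ hIJ
      simp only [mem_product, mem_powersetCard] at hIJ
      have hJA : Disjoint J A := (hAB.mono_right hIJ.2.1).symm
      rw [union_inter_eq_left_of_subset_of_disjoint hIJ.1.1 hJA,
        union_sdiff_eq_right_of_subset_of_disjoint hIJ.1.1 hJA]
  · intro K hK
    rw [mem_range, Nat.lt_succ_iff, ← (mem_powersetCard.1 hK).2]
    exact card_le_card inter_subset_left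

theorem sum_powersetCard_union_eq_sum_filter (hAB : Disjoint A B) (r : ℕ)
    (f : Finset α → Finset α → M) :
    ∑ K ∈ (A ∪ B).powersetCard r, f (K ∩ A) (K \ A) =
      ∑ i ∈ range (r + 1) with i ≤ #A ∧ r - i ≤ #B,
        ∑ I ∈ A.powersetCard i, ∑ J ∈ B.powersetCard (r - i), f I J := by
  rw [sum_filter_of_ne, sum_powersetCard_union hAB]
  intro i _ hne
  by_contra h
  rcases not_and_or.1 h with hi | hi
  · rw [powersetCard_eq_empty.2 (not_le.1 hi), sum_empty] at hne
    exact hne rfl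
  · simp only [powersetCard_eq_empty.2 (not_le.1 hi), sum_empty, sum_const_zero] at hne
    exact hne rfl

end Finset

open Finset

section SplitIndices

variable {n k m : ℕ}

/-- The indices `m₁` of the sum `Σ_{m₁+m₂=m}` over partial products. -/
def splitIndices (n k m : ℕ) : Finset ℕ :=
  (range (m + 1)).filter (fun m₁ => m₁ ≤ k ∧ m - m₁ ≤ n - k)

lemma mem_splitIndices {m₁ : ℕ} :
    m₁ ∈ splitIndices n k m ↔ m₁ ≤ m ∧ m₁ ≤ k ∧ m - m₁ ≤ n - k := by
  rw [splitIndices, mem_filter, mem_range, Nat.lt_succ_iff]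

lemma range_erase_eq_range_union_Icc (hk : k ≤ n) :
    (range (n + 1)).erase k = range k ∪ Icc (k + 1) n := by
  ext i
  simp only [mem_erase, mem_range, mem_union, mem_Icc]
  omega

lemma disjoint_range_Icc : Disjoint (range k) (Icc (k + 1) n) :=
  disjoint_left.2 fun i hik hin => by
    rw [mem_range] at hik
    rw [mem_Icc] at hin
    omega

lemma sum_splitIndices_sub {M : Type*} [AddCommMonoid M] (hk : k ≤ n) (hm : m ≤ n) (h : ℕ → M) :
    ∑ m₁ ∈ splitIndices n k m, h (k - m₁) =
      ∑ i ∈ range (n - m + 1) with i ≤ k ∧ n - m - i ≤ n - k, h i := by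
  refine sum_nbij' (k - ·) (k - ·) ?_ ?_ ?_ ?_ (fun _ _ => rfl)
  all_goals
    intro i hi
    simp only [splitIndices, mem_filter, mem_range] at hi ⊢
    omega

lemma exists_mem_splitIndices_of_mem_powersetCard (hk : k ≤ n) (hm : m ≤ n) {K : Finset ℕ}
    (hK : K ∈ (range k ∪ Icc (k + 1) n).powersetCard (n - m)) :
    ∃ m₁ ∈ splitIndices n k m, k - #(K ∩ range k) = m₁ ∧
      K ∩ range k ∈ (range k).powersetCard (k - m₁) ∧
      K \ range k ∈ (Icc (k + 1) n).powersetCard (n - k - (m - m₁)) := by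
  have hKr := sdiff_mem_powersetCard_sub_card_inter hK
  have hcardA : #(K ∩ range k) ≤ k := by
    simpa using card_le_card (inter_subset_right : K ∩ range k ⊆ range k)
  have hcardK : #(K ∩ range k) ≤ n - m :=
    (mem_powersetCard.1 hK).2 ▸ card_le_card inter_subset_left
  have hcardB : n - m - #(K ∩ range k) ≤ n - k := by
    have := card_le_card (mem_powersetCard.1 hKr).1
    rwa [(mem_powersetCard.1 hKr).2, Nat.card_Icc, Nat.add_sub_add_right] at this
  refine ⟨_, mem_splitIndices.2 ⟨by omega, by omega, by omega⟩, rfl,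
    mem_powersetCard.2 ⟨inter_subset_right, by omega⟩, ?_⟩
  convert hKr using 2
  omega

lemma sum_splitIndices_eq_sum_powersetCard {M : Type*} [AddCommMonoid M] (hk : k ≤ n)
    (hm : m ≤ n) (g : ℕ → Finset ℕ → Finset ℕ → M) :
    ∑ m₁ ∈ splitIndices n k m, ∑ I ∈ (range k).powersetCard (k - m₁),
        ∑ J ∈ (Icc (k + 1) n).powersetCard (n - k - (m - m₁)), g m₁ I J =
      ∑ K ∈ (range k ∪ Icc (k + 1) n).powersetCard (n - m),
        g (k - #(K ∩ range k)) (K ∩ range k) (K \ range k) := by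
  rw [sum_powersetCard_union_eq_sum_filter disjoint_range_Icc _ fun I J => g (k - #I) I J,
    card_range, Nat.card_Icc, Nat.add_sub_add_right, ← sum_splitIndices_sub hk hm]
  refine sum_congr rfl fun m₁ hm₁ => ?_
  have := mem_splitIndices.1 hm₁
  rw [show n - k - (m - m₁) = n - m - (k - m₁) by omega]
  refine sum_congr rfl fun I hI => ?_
  rw [(mem_powersetCard.1 hI).2, show k - (k - m₁) = m₁ by omega]

end SplitIndices

theorem stmt_1_general (u : ℝ) (hu : 0 < u) (n k m : ℕ) (x : ℕ → ℝ)
    (hk : k ≤ n) (hm : m ≤ n) (hnu : ((2 * n + 1 : ℕ) : ℝ) * u < 1)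
    (SL SR : ℕ → ℝ) (w' : ℝ)
    (hSL : ∀ m₁ m₂ : ℕ, m₁ + m₂ = m → m₁ ≤ k → m₂ ≤ n - k →
      ∃ θ : Finset ℕ → ℝ,
        (∀ I ∈ (Finset.range k).powersetCard (k - m₁), |θ I| ≤ gam u (2 * (k - 1) - m₁)) ∧
        SL m₁ = ∑ I ∈ (Finset.range k).powersetCard (k - m₁), (∏ i ∈ I, x i) * (1 + θ I))
    (hSR : ∀ m₁ m₂ : ℕ, m₁ + m₂ = m → m₁ ≤ k → m₂ ≤ n - k →
      ∃ θ : Finset ℕ → ℝ,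
        (∀ J ∈ (Finset.Icc (k + 1) n).powersetCard (n - k - m₂),
          |θ J| ≤ gam u (2 * (n - k - 1) - m₂)) ∧
        SR m₂ = ∑ J ∈ (Finset.Icc (k + 1) n).powersetCard (n - k - m₂),
          (∏ j ∈ J, x j) * (1 + θ J))
    (hw' : ∃ φ : ℕ → ℝ,
      (∀ m₁ ∈ (Finset.range (m + 1)).filter (fun m₁ => m₁ ≤ k ∧ m - m₁ ≤ n - k),
        |φ m₁| ≤ gam u (m + 1)) ∧
      w' = (-1 : ℝ) ^ (n - m) *
        ∑ m₁ ∈ (Finset.range (m + 1)).filter (fun m₁ => m₁ ≤ k ∧ m - m₁ ≤ n - k),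
          SL m₁ * SR (m - m₁) * (1 + φ m₁)) :
    ∃ θ : Finset ℕ → ℝ,
      (∀ I ∈ ((Finset.range (n + 1)).erase k).powersetCard (n - m), |θ I| ≤ gam u (2 * n + 1)) ∧
      w' = (-1 : ℝ) ^ (n - m) *
        ∑ I ∈ ((Finset.range (n + 1)).erase k).powersetCard (n - m),
          (∏ i ∈ I, x i) * (1 + θ I) := by
  obtain ⟨φ, hφ, rfl⟩ := hw'
  choose! θL hθL hSL using fun m₁ (h : m₁ ∈ splitIndices n k m) =>
    have := mem_splitIndices.1 h
    hSL m₁ (m - m₁) (by omega) this.2.1 this.2.2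
  choose! θR hθR hSR using fun m₁ (h : m₁ ∈ splitIndices n k m) =>
    have := mem_splitIndices.1 h
    hSR m₁ (m - m₁) (by omega) this.2.1 this.2.2
  let ρ : ℕ → Finset ℕ → Finset ℕ → ℝ := fun m₁ I J =>
    (1 + θL m₁ I) * (1 + θR m₁ J) * (1 + φ m₁)
  rw [range_erase_eq_range_union_Icc hk]
  refine ⟨fun K => ρ (k - #(K ∩ range k)) (K ∩ range k) (K \ range k) - 1, fun K hK => ?_, ?_⟩
  · obtain ⟨m₁, hm₁, rfl, hL, hR⟩ := exists_mem_splitIndices_of_mem_powersetCard hk hm hK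
    have := mem_splitIndices.1 hm₁
    exact abs_one_add_mul_one_add_mul_one_add_sub_one_le_gam hu.le (by omega) hnu
      (hθL _ hm₁ _ hL) (hθR _ hm₁ _ hR) (hφ _ hm₁)
  · congr 1
    calc ∑ m₁ ∈ splitIndices n k m, SL m₁ * SR (m - m₁) * (1 + φ m₁)
        = ∑ m₁ ∈ splitIndices n k m, ∑ I ∈ (range k).powersetCard (k - m₁),
            ∑ J ∈ (Icc (k + 1) n).powersetCard (n - k - (m - m₁)),
              (∏ i ∈ I, x i) * (∏ j ∈ J, x j) * ρ m₁ I J :=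
          sum_congr rfl fun m₁ hm₁ => by rw [hSL m₁ hm₁, hSR m₁ hm₁, sum_mul_mul_sum_mul_mul]
      _ = ∑ K ∈ (range k ∪ Icc (k + 1) n).powersetCard (n - m), (∏ i ∈ K ∩ range k, x i) *
            (∏ j ∈ K \ range k, x j) * ρ (k - #(K ∩ range k)) (K ∩ range k) (K \ range k) :=
          sum_splitIndices_eq_sum_powersetCard hk hm
            (fun m₁ I J => (∏ i ∈ I, x i) * (∏ j ∈ J, x j) * ρ m₁ I J)
      _ = _ := sum_congr rfl fun K _ => by
          rw [← prod_inter_mul_prod_sdiff K (range k)]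
          ring

/-- Rounding error representation for `ŵ'_{k,m}`, the computed coefficient of
`x^m` in `∏_{j<k}(x−x_j)·∏_{j>k}(x−x_j)`, computed by the method of partial products:
`ŵ' = (−1)^{n−m} Σ_{I ⊆ {0,…,n}∖{k}, |I| = n−m} (∏_{i∈I} x_i)(1+θ_I)` with `|θ_I| ≤ γ_{2n+1}`. -/
theorem stmt_1 (u : ℝ) (hu : 0 < u) (hu1 : u < 1) (n k m : ℕ) (x : ℕ → ℝ)
    (hk : k ≤ n) (hm : m ≤ n) (hnu : ((2 * n + 1 : ℕ) : ℝ) * u < 1)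
    (SL SR : ℕ → ℝ) (w' : ℝ)
    (hSL : ∀ m₁ m₂ : ℕ, m₁ + m₂ = m → m₁ ≤ k → m₂ ≤ n - k →
      ∃ θ : Finset ℕ → ℝ,
        (∀ I ∈ (Finset.range k).powersetCard (k - m₁), |θ I| ≤ gam u (2 * (k - 1) - m₁)) ∧
        SL m₁ = ∑ I ∈ (Finset.range k).powersetCard (k - m₁), (∏ i ∈ I, x i) * (1 + θ I))
    (hSR : ∀ m₁ m₂ : ℕ, m₁ + m₂ = m → m₁ ≤ k → m₂ ≤ n - k →
      ∃ θ : Finset ℕ → ℝ,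
        (∀ J ∈ (Finset.Icc (k + 1) n).powersetCard (n - k - m₂),
          |θ J| ≤ gam u (2 * (n - k - 1) - m₂)) ∧
        SR m₂ = ∑ J ∈ (Finset.Icc (k + 1) n).powersetCard (n - k - m₂),
          (∏ j ∈ J, x j) * (1 + θ J))
    (hw' : ∃ φ : ℕ → ℝ,
      (∀ m₁ ∈ (Finset.range (m + 1)).filter (fun m₁ => m₁ ≤ k ∧ m - m₁ ≤ n - k),
        |φ m₁| ≤ gam u (m + 1)) ∧
      w' = (-1 : ℝ) ^ (n - m) *
        ∑ m₁ ∈ (Finset.range (m + 1)).filter (fun m₁ => m₁ ≤ k ∧ m - m₁ ≤ n - k),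
          SL m₁ * SR (m - m₁) * (1 + φ m₁)) :
    ∃ θ : Finset ℕ → ℝ,
      (∀ I ∈ ((Finset.range (n + 1)).erase k).powersetCard (n - m), |θ I| ≤ gam u (2 * n + 1)) ∧
      w' = (-1 : ℝ) ^ (n - m) *
        ∑ I ∈ ((Finset.range (n + 1)).erase k).powersetCard (n - m),
          (∏ i ∈ I, x i) * (1 + θ I) :=
  stmt_1_general u hu n k m x hk hm hnu SL SR w' hSL hSR hw'
end

section
/- Let u ∈ (0,1), let x_0, …, x_n be distinct real numbers, let ζ ∈ ℝ, let 0 ≤ m ≤ n, let f : ℝ → ℝ, and assume (6n−m+4)·u < 1. Define the exact finite difference weights w_{k,m} = (−1)^{n−m}·m!·w_k·S_{n−m}((x_i − ζ)_{i≠k}), where w_k = 1/∏_{j≠k}(x_k − x_j). Suppose the computed approximation has the form ŝ = Σ_{k=0}^{n} f(x_k)·(−1)^{n−m}·m!·w_k·Σ_{I ⊆ {0,…,n}\{k}, |I| = n−m} (∏_{i∈I}(x_i − ζ))·(1+θ_{k,I}) for some numbers θ_{k,I} with |θ_{k,I}| ≤ γ_{6n−m+4}. Then |ŝ − Σ_{k=0}^{n}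 w_{k,m} f(x_k)| ≤ γ_{6n−m+4} · (max_{0≤j≤n} |f(x_j)|) · Σ_{k=0}^{n} m!·|w_k|·S_{n−m}((|x_i − ζ|)_{i≠k}). -/
theorem abs_sum_mul_one_add_sub_sum_le {ι : Type*} (s : Finset ι) (a θ : ι → ℝ) {γ : ℝ}
    (hθ : ∀ i ∈ s, |θ i| ≤ γ) :
    |∑ i ∈ s, a i * (1 + θ i) - ∑ i ∈ s, a i| ≤ γ * ∑ i ∈ s, |a i| := by
  have hdiff : ∑ i ∈ s, a i * (1 + θ i) - ∑ i ∈ s, a i = ∑ i ∈ s, a i * θ i := by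
    rw [← Finset.sum_sub_distrib]
    exact Finset.sum_congr rfl fun i _ => by ring
  rw [hdiff, Finset.mul_sum]
  refine (Finset.abs_sum_le_sum_abs _ _).trans (Finset.sum_le_sum fun i hi => ?_)
  rw [abs_mul, mul_comm γ]
  exact mul_le_mul_of_nonneg_left (hθ i hi) (abs_nonneg _)

theorem abs_mul_mul_sub_mul_mul_le {y a P' P M B : ℝ} (hy : |y| ≤ M) (hP : |P' - P| ≤ B) :
    |y * (a * P') - a * P * y| ≤ M * |a| * B := by
  have hfactor : y * (a * P') - a * P * y = y * a * (P' - P) := by ring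
  rw [hfactor, abs_mul, abs_mul]
  have hM : 0 ≤ M := (abs_nonneg _).trans hy
  gcongr

theorem stmt_4_general (u : ℝ) (n m : ℕ) (x : ℕ → ℝ) (ζ : ℝ)
    (f : ℝ → ℝ)
    (shat : ℝ) (θ : ℕ → Finset ℕ → ℝ)
    (hθ : ∀ k ∈ Finset.range (n + 1),
      ∀ I ∈ ((Finset.range (n + 1)).erase k).powersetCard (n - m),
        |θ k I| ≤ gam u (6 * n - m + 4))
    (hshat : shat = ∑ k ∈ Finset.range (n + 1),
      f (x k) * ((-1 : ℝ) ^ (n - m) * (m.factorial : ℝ) *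
        (1 / ∏ j ∈ (Finset.range (n + 1)).erase k, (x k - x j)) *
        ∑ I ∈ ((Finset.range (n + 1)).erase k).powersetCard (n - m),
          (∏ i ∈ I, (x i - ζ)) * (1 + θ k I))) :
    |shat - ∑ k ∈ Finset.range (n + 1),
        ((-1 : ℝ) ^ (n - m) * (m.factorial : ℝ) *
          (1 / ∏ j ∈ (Finset.range (n + 1)).erase k, (x k - x j)) *
          ∑ I ∈ ((Finset.range (n + 1)).erase k).powersetCard (n - m),
            ∏ i ∈ I, (x i - ζ)) * f (x k)| ≤
      gam u (6 * n - m + 4) *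
        ((Finset.range (n + 1)).sup' Finset.nonempty_range_add_one fun j => |f (x j)|) *
        ∑ k ∈ Finset.range (n + 1),
          (m.factorial : ℝ) * |1 / ∏ j ∈ (Finset.range (n + 1)).erase k, (x k - x j)| *
            ∑ I ∈ ((Finset.range (n + 1)).erase k).powersetCard (n - m),
              ∏ i ∈ I, |x i - ζ| := by
  subst hshat
  rw [← Finset.sum_sub_distrib, Finset.mul_sum]
  refine (Finset.abs_sum_le_sum_abs _ _).trans (Finset.sum_le_sum fun k hk => ?_)
  have hf : |f (x k)| ≤ _ := Finset.le_sup' (fun j => |f (x j)|) hk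
  have hperturb := abs_sum_mul_one_add_sub_sum_le _ (fun I => ∏ i ∈ I, (x i - ζ)) _ (hθ k hk)
  simp only [Finset.abs_prod] at hperturb
  refine (abs_mul_mul_sub_mul_mul_le hf hperturb).trans_eq ?_
  simp only [abs_mul, abs_pow, abs_neg, abs_one, one_pow, one_mul, Nat.abs_cast]
  ring

/-- The rounding error in the computed finite difference approximation
`ŝ` to `Σ_k w_{k,m} f(x_k)` is bounded by the paper's bound
`U_R = γ_{6n−m+4}·|f|·Σ_k m!|w_k| S_{n−m}((|x_i−ζ|)_{i≠k})`. -/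
theorem stmt_4 (u : ℝ) (hu : 0 < u) (hu1 : u < 1) (n m : ℕ) (x : ℕ → ℝ) (ζ : ℝ)
    (f : ℝ → ℝ)
    (hx : ∀ i ≤ n, ∀ j ≤ n, i ≠ j → x i ≠ x j)
    (hm : m ≤ n) (hnu : ((6 * n - m + 4 : ℕ) : ℝ) * u < 1)
    (shat : ℝ) (θ : ℕ → Finset ℕ → ℝ)
    (hθ : ∀ k ∈ Finset.range (n + 1),
      ∀ I ∈ ((Finset.range (n + 1)).erase k).powersetCard (n - m),
        |θ k I| ≤ gam u (6 * n - m + 4))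
    (hshat : shat = ∑ k ∈ Finset.range (n + 1),
      f (x k) * ((-1 : ℝ) ^ (n - m) * (m.factorial : ℝ) *
        (1 / ∏ j ∈ (Finset.range (n + 1)).erase k, (x k - x j)) *
        ∑ I ∈ ((Finset.range (n + 1)).erase k).powersetCard (n - m),
          (∏ i ∈ I, (x i - ζ)) * (1 + θ k I))) :
    |shat - ∑ k ∈ Finset.range (n + 1),
        ((-1 : ℝ) ^ (n - m) * (m.factorial : ℝ) *
          (1 / ∏ j ∈ (Finset.range (n + 1)).erase k, (x k - x j)) *
          ∑ I ∈ ((Finset.range (n + 1)).erase k).powersetCard (n - m),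
            ∏ i ∈ I, (x i - ζ)) * f (x k)| ≤
      gam u (6 * n - m + 4) *
        ((Finset.range (n + 1)).sup' Finset.nonempty_range_add_one fun j => |f (x j)|) *
        ∑ k ∈ Finset.range (n + 1),
          (m.factorial : ℝ) * |1 / ∏ j ∈ (Finset.range (n + 1)).erase k, (x k - x j)| *
            ∑ I ∈ ((Finset.range (n + 1)).erase k).powersetCard (n - m),
              ∏ i ∈ I, |x i - ζ| :=
  stmt_4_general u n m x ζ f shat θ hθ hshat
end

section
/- Let n ≥ 1 and let x_j = cos(jπ/n) for j = 0, 1, …, n be the Chebyshev points. Then for each ℓ with 0 ≤ ℓ ≤ n, the product W_ℓ = ∏_{j=0, j≠ℓ}^{n} (x_ℓ − x_j) equals (−1)^ℓ · 2n/2^{n−1} if ℓ = 0 or ℓ = n, and equals (−1)^ℓ · n/2^{n−1} otherwise. -/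
/-!
The Chebyshev points `x_j = cos (jπ/n)` are exactly the `n + 1` zeros of `(X² - 1) U_{n-1}`,
so this polynomial is `2^{n-1} ∏ⱼ (X - x_j)` and `2^{n-1} W_ℓ` is its derivative at `x_ℓ`.
The identity `n T_n = X U_{n-1} - (1 - X²) U_{n-1}'` turns that derivative into
`X U_{n-1} + n T_n`. At every node `T_n(x_ℓ) = (-1)^ℓ`, while `x_ℓ U_{n-1}(x_ℓ)` vanishes at the
interior nodes and equals `n (-1)^ℓ` at `x_ℓ = ±1`, which doubles the weight there.
-/

open Polynomial Real Finset Lagrange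

namespace Polynomial.Chebyshev

theorem derivative_X_sq_sub_one_mul_U (R : Type*) [CommRing R] (n : ℤ) :
    derivative ((X ^ 2 - 1) * U R n) = X * U R n + ((n : R[X]) + 1) * T R (n + 1) := by
  have h := add_one_mul_T_eq_poly_in_U (R := R) n
  simp only [derivative_mul, derivative_sub, derivative_X_sq, derivative_one, C_ofNat]
  linear_combination (norm := (push_cast; ring_nf)) -h

theorem eval_X_sq_sub_one_mul_U_cos (n : ℤ) (θ : ℝ) :
    ((X ^ 2 - 1) * U ℝ n).eval (cos θ) = -(sin θ * sin ((n + 1) * θ)) := by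
  rw [← U_real_cos]
  simp only [eval_mul, eval_sub, eval_pow, eval_X, eval_one]
  linear_combination (U ℝ n).eval (cos θ) * sin_sq_add_cos_sq θ

theorem sin_add_one_mul_nat_mul_pi_div (n ℓ : ℕ) :
    sin (((n : ℤ) + 1 : ℝ) * (ℓ * π / (n + 1 : ℕ))) = 0 := by
  rw [← sin_nat_mul_pi ℓ]
  push_cast
  field_simp

theorem U_eval_node_eq_zero {n ℓ : ℕ} (h0 : 0 < ℓ) (hℓ : ℓ < n + 1) :
    (U ℝ n).eval (node (n + 1) ℓ) = 0 := by
  have hθ : 0 < ℓ * π / (n + 1 : ℕ) := by positivity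
  have hθπ : ℓ * π / (n + 1 : ℕ) < π := by
    rw [div_lt_iff₀ (by positivity), mul_comm]
    gcongr
  have hU := U_real_cos (ℓ * π / (n + 1 : ℕ)) n
  rw [sin_add_one_mul_nat_mul_pi_div] at hU
  exact (mul_eq_zero.mp hU).resolve_right (sin_pos_of_pos_of_lt_pi hθ hθπ).ne'

theorem node_mul_U_eval_node_of_endpoint {n ℓ : ℕ} (hℓ : ℓ = 0 ∨ ℓ = n + 1) :
    node (n + 1) ℓ * (U ℝ n).eval (node (n + 1) ℓ) = (n + 1) * (-1) ^ ℓ := by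
  rcases hℓ with rfl | rfl
  · simp [node_eq_one, U_eval_one]
  · rw [node_eq_neg_one n.succ_ne_zero, U_eval_neg_one, Int.cast_negOnePow, zpow_natCast]
    push_cast
    ring

theorem X_sq_sub_one_mul_U_eq_nodal (n : ℕ) :
    (X ^ 2 - 1) * U ℝ n = Polynomial.C (2 ^ n) * nodal (range (n + 2)) (node (n + 1)) := by
  have hmonic : ((X : ℝ[X]) ^ 2 - 1).Monic := by
    simpa using monic_X_pow_sub_C (1 : ℝ) two_ne_zero
  have hdeg : ((X : ℝ[X]) ^ 2 - 1).degree = 2 := by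
    simpa using degree_X_pow_sub_C two_pos (1 : ℝ)
  have hdeg' : ((X ^ 2 - 1) * U ℝ n).degree = (#(range (n + 2)) : WithBot ℕ) := by
    rw [degree_mul, hdeg, degree_U_natCast, card_range]
    norm_cast
    omega
  refine eq_of_degree_le_of_eval_index_eq _ (strictAntiOn_node (n + 1)).injOn hdeg'.le ?_ ?_ ?_
  · rw [hdeg', degree_C_mul (by positivity), degree_nodal]
  · rw [leadingCoeff_mul, hmonic.leadingCoeff, leadingCoeff_U_natCast, leadingCoeff_mul,
      leadingCoeff_C, nodal_monic.leadingCoeff]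
    ring
  · intro ℓ hℓ
    rw [eval_mul (p := Polynomial.C _), eval_nodal_at_node hℓ, mul_zero, node, eval_X_sq_sub_one_mul_U_cos,
      sin_add_one_mul_nat_mul_pi_div, mul_zero, neg_zero]

theorem prod_erase_node_sub_node (n ℓ : ℕ) (hℓ : ℓ ≤ n + 1) :
    2 ^ n * ∏ j ∈ (range (n + 2)).erase ℓ, (node (n + 1) ℓ - node (n + 1) j)
      = node (n + 1) ℓ * (U ℝ n).eval (node (n + 1) ℓ) + (n + 1) * (-1) ^ ℓ := by
  have hmem : ℓ ∈ range (n + 2) := mem_range.mpr (by omega)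
  rw [← eval_nodal, ← eval_nodal_derivative_eval_node_eq hmem,
    ← eval_C (a := (2 : ℝ) ^ n) (x := node (n + 1) ℓ), ← eval_mul, ← derivative_C_mul,
    ← X_sq_sub_one_mul_U_eq_nodal, derivative_X_sq_sub_one_mul_U]
  simp only [eval_add, eval_mul, eval_X, eval_intCast, eval_one]
  rw [show ((n : ℤ) + 1) = ((n + 1 : ℕ) : ℤ) by push_cast; rfl,
    eval_T_real_node (mem_Iic.mpr hℓ)]
  push_cast
  rfl

end Polynomial.Chebyshev

open Polynomial.Chebyshev

/-- For the Chebyshev points `x_j = cos(jπ/n)`, the inverse Lagrange weight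
`W_ℓ = ∏_{j≠ℓ}(x_ℓ − x_j)` equals `(−1)^ℓ·2n/2^{n−1}` for `ℓ = 0, n` and
`(−1)^ℓ·n/2^{n−1}` otherwise. -/
theorem stmt_6 (n : ℕ) (hn : 1 ≤ n) (ℓ : ℕ) (hℓ : ℓ ≤ n) :
    ∏ j ∈ (Finset.range (n + 1)).erase ℓ,
        (Real.cos (ℓ * Real.pi / n) - Real.cos (j * Real.pi / n)) =
      if ℓ = 0 ∨ ℓ = n then (-1 : ℝ) ^ ℓ * (2 * n) / 2 ^ (n - 1)
      else (-1 : ℝ) ^ ℓ * n / 2 ^ (n - 1) := by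
  obtain ⟨n, rfl⟩ := Nat.exists_eq_add_of_le' hn
  have hW := prod_erase_node_sub_node n ℓ hℓ
  rw [Nat.add_sub_cancel]
  split_ifs with hend
  · rw [node_mul_U_eval_node_of_endpoint hend] at hW
    rw [eq_div_iff (by positivity), mul_comm]
    exact hW.trans (by push_cast; ring)
  · rw [U_eval_node_eq_zero (by omega) (by omega)] at hW
    rw [eq_div_iff (by positivity), mul_comm]
    exact hW.trans (by push_cast; ring)
end

section
/- Fix an integer r ≥ 1. With x_j = cos(jπ/n) the Chebyshev points, define P_r^0(n) = Σ_{j=1}^{n} (1 − x_j)^{−r} = Σ_{j=1}^{n} (1 − cos(jπ/n))^{−r}. Then lim_{n→∞} P_r^0(n)/n^{2r} = 2^r·ζ(2r)/π^{2r}, where ζ is the Riemann zeta function. -/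
/-!
Scaled by `n ^ (2 * r)`, the `j`-th term is `(n² (1 - cos (jπ/n)))⁻ʳ`, which tends to
`((jπ)² / 2)⁻ʳ` as `n → ∞` for each fixed `j`. Jordan's inequality `1 - cos x ≥ 2x²/π²` on
`[0, π]` bounds every term by `(2j²)⁻ʳ`, which is summable because `2r > 1`, so Tannery's theorem
(dominated convergence for series) gives the limit `2ʳ π⁻²ʳ ∑ j⁻²ʳ = 2ʳ ζ(2r) / π²ʳ`.
-/

open Real Filter Finset Topology

lemma abs_sq_mul_one_sub_cos_div_sub_le {c x : ℝ} (hcx : |c| ≤ x) :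
    |x ^ 2 * (1 - cos (c / x)) - c ^ 2 / 2| ≤ 5 / 96 * c ^ 4 / x ^ 2 := by
  rcases (abs_nonneg c).trans hcx |>.eq_or_lt with rfl | hx
  · simp_all
  have h_le_one : |c / x| ≤ 1 := by
    rwa [abs_div, abs_of_pos hx, div_le_one hx]
  calc |x ^ 2 * (1 - cos (c / x)) - c ^ 2 / 2|
      = x ^ 2 * |cos (c / x) - (1 - (c / x) ^ 2 / 2)| := by
        rw [← abs_of_pos (pow_pos hx 2), ← abs_mul, ← abs_neg, abs_of_pos (pow_pos hx 2)]
        congr 1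
        field_simp
        ring
    _ ≤ x ^ 2 * (|c / x| ^ 4 * (5 / 96)) := by gcongr; exact cos_bound h_le_one
    _ = 5 / 96 * c ^ 4 / x ^ 2 := by
        rw [pow_abs, abs_of_nonneg (by positivity)]
        field_simp

lemma tendsto_sq_mul_one_sub_cos_div (c : ℝ) :
    Tendsto (fun n : ℕ => (n : ℝ) ^ 2 * (1 - cos (c / n))) atTop (𝓝 (c ^ 2 / 2)) := by
  have h_err : Tendsto (fun n : ℕ => 5 / 96 * c ^ 4 / (n : ℝ) ^ 2) atTop (𝓝 0) :=
    tendsto_const_nhds.div_atTop <|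
      (tendsto_pow_atTop two_ne_zero).comp tendsto_natCast_atTop_atTop
  refine tendsto_sub_nhds_zero_iff.1 <| squeeze_zero_norm' ?_ h_err
  filter_upwards [eventually_ge_atTop ⌈|c|⌉₊] with n hn
  exact abs_sq_mul_one_sub_cos_div_sub_le (Nat.ceil_le.1 hn)

lemma two_mul_sq_le_sq_mul_one_sub_cos {j n : ℝ} (hj : 0 ≤ j) (hjn : j ≤ n) :
    2 * j ^ 2 ≤ n ^ 2 * (1 - cos (j * π / n)) := by
  rcases (hj.trans hjn).eq_or_lt with rfl | hn
  · simp [le_antisymm hjn hj]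
  have h_arg : |j * π / n| ≤ π := by
    rw [abs_of_nonneg (by positivity), div_le_iff₀ hn]
    exact mul_comm π n ▸ mul_le_mul_of_nonneg_right hjn pi_pos.le
  calc 2 * j ^ 2 = n ^ 2 * (2 / π ^ 2 * (j * π / n) ^ 2) := by
        field_simp
    _ ≤ n ^ 2 * (1 - cos (j * π / n)) := by
        gcongr
        linarith [cos_le_one_sub_mul_cos_sq h_arg]

lemma sum_inv_one_sub_cos_pow_div_eq_tsum (r n : ℕ) :
    (∑ j ∈ Icc 1 n, 1 / (1 - cos (j * π / n)) ^ r) / (n : ℝ) ^ (2 * r) =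
      ∑' j : ℕ, (Icc 1 n : Set ℕ).indicator
        (fun j : ℕ => (((n : ℝ) ^ 2 * (1 - cos (j * π / n))) ^ r)⁻¹) j := by
  rw [tsum_eq_sum (s := Icc 1 n) fun j hj => Set.indicator_of_notMem (by simpa using hj) _,
    sum_div]
  refine sum_congr rfl fun j hj => ?_
  rw [Set.indicator_of_mem (by simpa using hj), mul_pow, ← pow_mul, mul_inv, one_div,
    div_eq_mul_inv, mul_comm]

lemma tendsto_tsum_indicator_inv_sq_mul_one_sub_cos_pow {r : ℕ} (hr : r ≠ 0) :
    Tendsto (fun n : ℕ => ∑' j : ℕ, (Icc 1 n : Set ℕ).indicator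
        (fun j : ℕ => (((n : ℝ) ^ 2 * (1 - cos (j * π / n))) ^ r)⁻¹) j)
      atTop (𝓝 (∑' j : ℕ, ((((j : ℝ) * π) ^ 2 / 2) ^ r)⁻¹)) := by
  have h_summable : Summable fun j : ℕ => ((2 * (j : ℝ) ^ 2) ^ r)⁻¹ := by
    refine ((summable_nat_pow_inv.2 (by omega : 1 < 2 * r)).mul_left (2 ^ r)⁻¹).congr
      fun j => ?_
    rw [mul_pow, ← pow_mul, mul_inv]
  refine tendsto_tsum_of_dominated_convergence h_summable (fun j => ?_) ?_
  · rcases j.eq_zero_or_pos with rfl | hj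
    · simp [hr]
    refine (((tendsto_sq_mul_one_sub_cos_div (j * π)).pow r).inv₀ (by positivity)).congr' ?_
    filter_upwards [eventually_ge_atTop j] with n hn
    rw [Set.indicator_of_mem (by simpa using ⟨hj, hn⟩)]
  · refine Eventually.of_forall fun n j => ?_
    by_cases hj : j ∈ Icc 1 n
    · obtain ⟨hj_pos, hjn⟩ := mem_Icc.1 hj
      have h_lower := two_mul_sq_le_sq_mul_one_sub_cos (Nat.cast_nonneg j)
        (Nat.cast_le.2 hjn : (j : ℝ) ≤ n)
      have h_pos : 0 < 2 * (j : ℝ) ^ 2 := by positivity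
      rw [Set.indicator_of_mem (by simpa using hj), norm_inv, norm_pow,
        Real.norm_of_nonneg (h_pos.le.trans h_lower)]
      exact inv_anti₀ (by positivity) (pow_le_pow_left₀ h_pos.le h_lower r)
    · rw [Set.indicator_of_notMem (by simpa using hj), norm_zero]
      positivity

lemma tsum_inv_sq_mul_pi_sq_div_two_pow (r : ℕ) :
    ∑' j : ℕ, ((((j : ℝ) * π) ^ 2 / 2) ^ r)⁻¹ =
      2 ^ r / π ^ (2 * r) * ∑' j : ℕ, ((j : ℝ) ^ (2 * r))⁻¹ := by
  rw [← tsum_mul_left]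
  congr 1 with j
  rw [div_pow, mul_pow, mul_pow, ← pow_mul, ← pow_mul, inv_div]
  ring

theorem tendsto_sum_inv_one_sub_cos_pow_div {r : ℕ} (hr : r ≠ 0) :
    Tendsto (fun n : ℕ => (∑ j ∈ Icc 1 n, 1 / (1 - cos (j * π / n)) ^ r) / (n : ℝ) ^ (2 * r))
      atTop (𝓝 (2 ^ r / π ^ (2 * r) * ∑' j : ℕ, ((j : ℝ) ^ (2 * r))⁻¹)) := by
  simp_rw [sum_inv_one_sub_cos_pow_div_eq_tsum, ← tsum_inv_sq_mul_pi_sq_div_two_pow]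
  exact tendsto_tsum_indicator_inv_sq_mul_one_sub_cos_pow hr

/-- For the Chebyshev points `x_j = cos(jπ/n)`, the power sum
`P_r^0(n) = Σ_{j=1}^n 1/(1 − x_j)^r` satisfies
`lim_{n→∞} P_r^0(n)/n^{2r} = 2^r ζ(2r)/π^{2r}`, where `ζ` is the Riemann zeta function. -/
theorem stmt_7 (r : ℕ) (hr : 1 ≤ r) :
    Filter.Tendsto
      (fun n : ℕ =>
        (((∑ j ∈ Finset.Icc 1 n, 1 / (1 - Real.cos (j * Real.pi / n)) ^ r) /
          (n : ℝ) ^ (2 * r) : ℝ) : ℂ))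
      Filter.atTop
      (nhds (2 ^ r * riemannZeta (2 * r) / (Real.pi : ℂ) ^ (2 * r))) := by
  have h_zeta : riemannZeta (2 * r) = ((∑' j : ℕ, ((j : ℝ) ^ (2 * r))⁻¹ : ℝ) : ℂ) := by
    rw [show (2 * r : ℂ) = ((2 * r : ℕ) : ℂ) by push_cast; ring,
      zeta_nat_eq_tsum_of_gt_one (by omega), Complex.ofReal_tsum]
    push_cast
    simp only [one_div]
  have h_limit : 2 ^ r * riemannZeta (2 * r) / (π : ℂ) ^ (2 * r) =
      ((2 ^ r / π ^ (2 * r) * ∑' j : ℕ, ((j : ℝ) ^ (2 * r))⁻¹ : ℝ) : ℂ) := by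
    rw [h_zeta]
    push_cast
    ring
  rw [h_limit]
  exact (Complex.continuous_ofReal.tendsto _).comp
    (tendsto_sum_inv_one_sub_cos_pow_div (by omega))
end

section
/- Let x_0, x_1, …, x_N be real numbers and let 0 ≤ m ≤ N+1. Then the m-th derivative of the polynomial ω(x) = ∏_{j=0}^{N} (x − x_j) satisfies ω^{(m)}(x) = m! · S_{N+1−m}(x − x_0, x − x_1, …, x − x_N) for every real x, where S_{N+1−m} is the elementary symmetric function of order N+1−m. In particular, for distinct nodes, the finite difference weight w_{k,m} = ℓ_k^{(m)}(ζ) (where ℓ_k is the Lagrange cardinal function) equals (−1)^{n−m}·m!·w_k·S_{n−m}((x_j − ζ)_{j≠k}), with w_k = 1/∏_{j≠k}(x_k − x_j). -/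
section Stmt13Aux
open Polynomial Finset

lemma deriv_fprod {s : Finset ℕ} {f : ℕ → ℝ[X]} :
    derivative (∏ i ∈ s, f i) = ∑ i ∈ s, (∏ j ∈ s.erase i, f j) * derivative (f i) := by
  classical
  induction s using Finset.induction_on with
  | empty => simp
  | @insert a s ha ih =>
    rw [Finset.prod_insert ha, derivative_mul, ih, Finset.sum_insert ha,
      Finset.erase_insert ha, Finset.mul_sum]
    have : ∀ i ∈ s, (∏ j ∈ (insert a s).erase i, f j) * derivative (f i)
        = f a * ((∏ j ∈ s.erase i, f j) * derivative (f i)) := by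
      intro i hi
      rw [Finset.erase_insert_of_ne (by rintro rfl; exact ha hi),
        Finset.prod_insert (fun h => ha (Finset.mem_of_mem_erase h)), mul_assoc]
    rw [Finset.sum_congr rfl this, add_comm, mul_comm]
    ring

lemma comb (A : Finset ℕ) (g : ℕ → ℝ[X]) (c : ℕ) (hc : 0 < c) :
    ∑ I ∈ A.powersetCard c, ∑ i ∈ I, ∏ j ∈ I.erase i, g j
      = ∑ J ∈ A.powersetCard (c - 1), (A.card - (c - 1)) • ∏ j ∈ J, g j := by
  classical
  rw [Finset.sum_sigma']
  have : ∀ J ∈ A.powersetCard (c-1), (A.card - (c-1)) • ∏ j ∈ J, g j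
      = ∑ i ∈ A \ J, ∏ j ∈ J, g j := by
    intro J hJ
    rw [Finset.sum_const, Finset.card_sdiff_of_subset (Finset.mem_powersetCard.1 hJ).1,
      (Finset.mem_powersetCard.1 hJ).2]
  rw [Finset.sum_congr rfl this, Finset.sum_sigma']
  refine Finset.sum_nbij' (fun p => ⟨p.1.erase p.2, p.2⟩) (fun q => ⟨insert q.2 q.1, q.2⟩)
    ?_ ?_ ?_ ?_ ?_
  · rintro ⟨I, i⟩ hp
    rw [Finset.mem_sigma, Finset.mem_powersetCard] at *
    obtain ⟨⟨hIA, hIc⟩, hi⟩ := hp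
    refine ⟨⟨(Finset.erase_subset _ _).trans hIA, by rw [Finset.card_erase_of_mem hi, hIc]⟩, ?_⟩
    simp [Finset.mem_sdiff, hIA hi]
  · rintro ⟨J, i⟩ hq
    rw [Finset.mem_sigma, Finset.mem_powersetCard] at *
    obtain ⟨⟨hJA, hJc⟩, hi⟩ := hq
    rw [Finset.mem_sdiff] at hi
    refine ⟨⟨Finset.insert_subset hi.1 hJA, ?_⟩, Finset.mem_insert_self _ _⟩
    rw [Finset.card_insert_of_notMem hi.2, hJc, Nat.sub_add_cancel hc]
  · rintro ⟨I, i⟩ hp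
    rw [Finset.mem_sigma] at hp
    simp [Finset.insert_erase hp.2]
  · rintro ⟨J, i⟩ hq
    rw [Finset.mem_sigma, Finset.mem_sdiff] at hq
    simp [Finset.erase_insert hq.2.2]
  · rintro ⟨I, i⟩ _; rfl

lemma poly_key (A : Finset ℕ) (x : ℕ → ℝ) :
    ∀ m ≤ A.card, Polynomial.derivative^[m] (∏ j ∈ A, (X - C (x j)))
      = C (m.factorial : ℝ) * ∑ I ∈ A.powersetCard (A.card - m), ∏ j ∈ I, (X - C (x j)) := by
  intro m
  induction m with
  | zero => intro _; simp [Finset.powersetCard_self]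
  | succ m ih =>
    intro hm
    have hc : 0 < A.card - m := Nat.sub_pos_of_lt hm
    rw [Function.iterate_succ_apply', ih (Nat.le_of_succ_le hm), derivative_C_mul,
      map_sum]
    have h1 : ∀ I ∈ A.powersetCard (A.card - m),
        derivative (∏ j ∈ I, (X - C (x j))) = ∑ i ∈ I, ∏ j ∈ I.erase i, (X - C (x j)) := by
      intro I _
      rw [deriv_fprod]
      exact Finset.sum_congr rfl fun i _ => by rw [derivative_X_sub_C, mul_one]
    rw [Finset.sum_congr rfl h1, comb A _ _ hc]
    have h2 : A.card - m - 1 = A.card - (m + 1) := by omega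
    have h3 : A.card - (A.card - m - 1) = m + 1 := by omega
    rw [h2]
    rw [← Finset.smul_sum]
    have hfac : C (((m+1).factorial : ℕ) : ℝ)
        = ((m + 1 : ℕ) : ℝ[X]) * C ((m.factorial : ℕ) : ℝ) := by
      rw [Nat.factorial_succ, Nat.cast_mul, map_mul, Polynomial.C_eq_natCast]
    rw [h2] at h3
    rw [h3, nsmul_eq_mul, hfac]
    ring

lemma iter_eval (p : ℝ[X]) (m : ℕ) :
    iteratedDeriv m (fun s => p.eval s) = fun t => (Polynomial.derivative^[m] p).eval t := by
  induction m with
  | zero => simp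
  | succ m ih =>
    rw [iteratedDeriv_succ, ih, Function.iterate_succ_apply']
    funext t
    exact Polynomial.deriv (p := Polynomial.derivative^[m] p) (x := t)


end Stmt13Aux

open Polynomial in
/-- (1) The `m`-th derivative of `ω(t) = ∏_{j=0}^{N}(t − x_j)` is
`ω^{(m)}(t) = m!·S_{N+1−m}(t−x_0, …, t−x_N)`, where `S` is the elementary symmetric
function. (2) Consequently, for distinct nodes the finite difference weight
`w_{k,m} = ℓ_k^{(m)}(ζ)` equals `(−1)^{n−m}·m!·w_k·S_{n−m}((x_j−ζ)_{j≠k})`, with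
`w_k = 1/∏_{j≠k}(x_k − x_j)`. -/
theorem stmt_13 :
    (∀ (N : ℕ) (x : ℕ → ℝ) (m : ℕ), m ≤ N + 1 → ∀ t : ℝ,
      iteratedDeriv m (fun s => ∏ j ∈ Finset.range (N + 1), (s - x j)) t =
        (m.factorial : ℝ) *
          ∑ I ∈ (Finset.range (N + 1)).powersetCard (N + 1 - m), ∏ j ∈ I, (t - x j)) ∧
    (∀ (n : ℕ) (x : ℕ → ℝ), (∀ i ≤ n, ∀ j ≤ n, i ≠ j → x i ≠ x j) →
      ∀ k ≤ n, ∀ m ≤ n, ∀ ζ : ℝ,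
      iteratedDeriv m (fun s =>
          (∏ j ∈ (Finset.range (n + 1)).erase k, (s - x j)) /
            ∏ j ∈ (Finset.range (n + 1)).erase k, (x k - x j)) ζ =
        (-1 : ℝ) ^ (n - m) * (m.factorial : ℝ) *
          (1 / ∏ j ∈ (Finset.range (n + 1)).erase k, (x k - x j)) *
          ∑ I ∈ ((Finset.range (n + 1)).erase k).powersetCard (n - m),
            ∏ j ∈ I, (x j - ζ)) := by
  constructor
  · intro N x m hm t
    have hA : (fun s : ℝ => ∏ j ∈ Finset.range (N+1), (s - x j))
        = fun s => (∏ j ∈ Finset.range (N+1), (X - C (x j))).eval s := by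
      funext s; simp [Polynomial.eval_prod]
    rw [hA]
    rw [iter_eval]
    rw [poly_key (Finset.range (N+1)) x m (by rwa [Finset.card_range])]
    simp [Polynomial.eval_prod, Polynomial.eval_finset_sum]
  · intro n x _ k hk m hm ζ
    set A := (Finset.range (n+1)).erase k with hAdef
    set D := ∏ j ∈ A, (x k - x j) with hDdef
    have hcard : A.card = n := by
      rw [hAdef, Finset.card_erase_of_mem (Finset.mem_range.2 (Nat.lt_succ_of_le hk)),
        Finset.card_range]
      exact Nat.succ_sub_one n
    have hf : (fun s : ℝ => (∏ j ∈ A, (s - x j)) / D)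
        = fun s => (C D⁻¹ * ∏ j ∈ A, (X - C (x j))).eval s := by
      funext s
      simp [div_eq_mul_inv, Polynomial.eval_prod, mul_comm]
    rw [hf, iter_eval, Polynomial.iterate_derivative_C_mul,
      poly_key A x m (hcard ▸ hm)]
    have hsum : ∀ I ∈ A.powersetCard (n - m),
        ∏ j ∈ I, (ζ - x j) = (-1 : ℝ)^(n-m) * ∏ j ∈ I, (x j - ζ) := by
      intro I hI
      have hcI : I.card = n - m := (Finset.mem_powersetCard.1 hI).2
      have : ∀ j ∈ I, (ζ - x j) = -(x j - ζ) := fun j _ => by ring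
      rw [Finset.prod_congr rfl this, ← hcI, ← Finset.prod_const (-1 : ℝ),
        ← Finset.prod_mul_distrib]
      exact Finset.prod_congr rfl fun j _ => by ring
    rw [hcard]
    simp only [Polynomial.eval_mul, Polynomial.eval_C, Polynomial.eval_finset_sum,
      Polynomial.eval_prod, Polynomial.eval_sub, Polynomial.eval_X]
    rw [Finset.sum_congr rfl hsum, ← Finset.mul_sum, one_div]
    ring
end

section
/- Let n ≥ 1, let x_j = cos(jπ/n) be the Chebyshev points, and let f : [−1,1] → ℝ be (n+1)-times continuously differentiable. Let p be the unique polynomial of degree at most n interpolating f at x_0, …, x_n. Then there exists ξ ∈ (−1, 1) such that f'(1) − p'(1) = (f^{(n+1)}(ξ)/(n+1)!) · ∏_{j=1}^{n} (1 − x_j) = (f^{(n+1)}(ξ)/(n+1)!) · (2n/2^{n−1}). -/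
/-!
Let `ω = ∏ (X - x)` over the nodes `{b} ∪ S` and choose `c` so that `g = f - (p + c ω)` has
`g'(b) = 0`. Then `g` vanishes at the `n + 1` nodes, so Rolle's theorem gives `n` interior zeros
of `g'`; together with `b` these are `n + 1` zeros of `g'`, and `n` further applications of Rolle
give `ξ` with `g⁽ⁿ⁺¹⁾(ξ) = 0`, i.e. `f⁽ⁿ⁺¹⁾(ξ) = c (n + 1)!`. As `ω'(b) = ∏_{x ∈ S} (b - x)`, this
is the error formula.

For the Chebyshev points, `x₁, …, x_{n-1}` are the roots of `U_{n-1}`, whose leading coefficient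
is `2^{n-1}` and whose value at `1` is `n`; with `1 - x_n = 2` this gives
`∏ (1 - x_j) = 2n / 2^{n-1}`.
-/

open Polynomial Set Finset Real
open scoped Nat

namespace Polynomial

theorem iterate_derivative_natDegree {R : Type*} [CommSemiring R] (p : R[X]) :
    derivative^[p.natDegree] p = C ((p.natDegree)! * p.leadingCoeff) := by
  rw [eq_C_of_natDegree_le_zero (p := derivative^[_] p)
      (by simpa using natDegree_iterate_derivative p p.natDegree),
    coeff_iterate_derivative, zero_add, Nat.descFactorial_self, nsmul_eq_mul, leadingCoeff]

variable {𝕜 : Type*} [NontriviallyNormedField 𝕜]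

theorem iteratedDeriv_eval (q : 𝕜[X]) (k : ℕ) :
    iteratedDeriv k (fun x => q.eval x) = fun x => (derivative^[k] q).eval x := by
  rw [iteratedDeriv_eq_iterate]
  induction k generalizing q with
  | zero => rfl
  | succ k ih =>
    have hderiv : _root_.deriv (fun x => q.eval x) = fun x => (derivative q).eval x := by
      ext x
      exact q.deriv
    rw [Function.iterate_succ_apply, Function.iterate_succ_apply, hderiv, ih]

theorem contDiff_eval (q : 𝕜[X]) (n : WithTop ℕ∞) : ContDiff 𝕜 n fun x => q.eval x := by
  simpa using q.contDiff_aeval (𝕜 := 𝕜) n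

theorem iteratedDerivWithin_eval (q : 𝕜[X]) (k : ℕ) {s : Set 𝕜} (hs : UniqueDiffOn 𝕜 s) {x : 𝕜}
    (hx : x ∈ s) : iteratedDerivWithin k (fun y => q.eval y) s x = (derivative^[k] q).eval x := by
  rw [iteratedDerivWithin_eq_iteratedDeriv hs (q.contDiff_eval k).contDiffAt hx,
    iteratedDeriv_eval]

end Polynomial

namespace Lagrange

variable {R ι : Type*} [CommRing R]

theorem iterate_derivative_nodal [Nontrivial R] (s : Finset ι) (v : ι → R) :
    derivative^[#s] (nodal s v) = C ((#s)! : R) := by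
  simpa [natDegree_nodal, (nodal_monic (s := s) (v := v)).leadingCoeff] using
    iterate_derivative_natDegree (nodal s v)

theorem eval_derivative_nodal_insert [DecidableEq ι] {s : Finset ι} {i : ι} (hi : i ∉ s)
    (v : ι → R) :
    (derivative (nodal (insert i s) v)).eval (v i) = ∏ j ∈ s, (v i - v j) := by
  rw [eval_nodal_derivative_eval_node_eq (mem_insert_self i s), erase_insert hi, eval_nodal]

end Lagrange

namespace Polynomial.Chebyshev

theorem U_real_eq_prod (m : ℕ) :
    U ℝ m = Polynomial.C (2 ^ m) *
      ∏ k ∈ range m, (X - Polynomial.C (cos ((k + 1) * π / (m + 1)))) := by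
  have hinj := (range m).nodup_map_iff_injOn.mp (roots_U_real_nodup m)
  have hcard : Multiset.card (U ℝ m).roots = (U ℝ m).natDegree := by
    rw [roots_U_real, natDegree_U_natCast, Finset.card_val, Finset.card_image_of_injOn hinj,
      card_range]
  rw [← C_leadingCoeff_mul_prod_multiset_X_sub_C hcard, leadingCoeff_U_natCast, roots_U_real,
    ← Finset.prod_eq_multiset_prod, prod_image hinj]

end Polynomial.Chebyshev

theorem prod_one_sub_cos_mul_pi_div {n : ℕ} (hn : 1 ≤ n) :
    ∏ j ∈ Icc 1 n, (1 - cos (j * π / n)) = 2 * n / 2 ^ (n - 1) := by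
  obtain ⟨m, rfl⟩ := Nat.exists_eq_add_of_le' hn
  have hU := congrArg (eval 1) (Chebyshev.U_real_eq_prod m)
  simp only [Chebyshev.U_eval_one, eval_mul, eval_C, eval_prod, eval_sub, eval_X] at hU
  rw [prod_Icc_succ_top (by omega), ← Finset.Ico_add_one_right_eq_Icc, prod_Ico_eq_prod_range]
  push_cast at hU ⊢
  have hπ : ((m : ℝ) + 1) * π / (m + 1) = π := by field_simp
  simp only [hπ, cos_pi, add_comm (1 : ℝ) _] at hU ⊢
  set P := ∏ k ∈ range m, (1 - cos ((k + 1) * π / (m + 1)))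
  rw [hU]
  field_simp
  ring

section Rolle

variable {a b : ℝ}

theorem exists_finset_deriv_eq_zero {h : ℝ → ℝ} (hh : ContinuousOn h (Icc a b)) {S : Finset ℝ}
    {m : ℕ} (hcard : #S = m + 1) (hS : ↑S ⊆ Icc a b) (hzero : ∀ x ∈ S, h x = 0) :
    ∃ T : Finset ℝ, #T = m ∧ ↑T ⊆ Ioo a b ∧ ∀ y ∈ T, deriv h y = 0 := by
  set z := S.orderEmbOfFin hcard
  have hz : ∀ i, z i ∈ Icc a b := fun i => hS (S.orderEmbOfFin_mem hcard i)
  have hrolle (i : Fin m) : ∃ c ∈ Ioo (z i.castSucc) (z i.succ), deriv h c = 0 :=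
    exists_deriv_eq_zero (z.strictMono i.castSucc_lt_succ)
      (hh.mono (Icc_subset_Icc (hz _).1 (hz _).2))
      (by rw [hzero _ (S.orderEmbOfFin_mem hcard _), hzero _ (S.orderEmbOfFin_mem hcard _)])
  choose y hy hdy using hrolle
  have hy_mono : StrictMono y := fun i j hij =>
    calc y i < z i.succ := (hy i).2
      _ ≤ z j.castSucc := z.monotone (Fin.succ_le_castSucc_iff.mpr hij)
      _ < y j := (hy j).1
  refine ⟨univ.image y, by rw [card_image_of_injective _ hy_mono.injective, card_univ,
    Fintype.card_fin], ?_, by simpa using hdy⟩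
  rintro _ hc
  obtain ⟨i, -, rfl⟩ := Finset.mem_image.mp hc
  exact ⟨(hz _).1.trans_lt (hy i).1, (hy i).2.trans_le (hz _).2⟩

theorem exists_finset_iteratedDerivWithin_succ_eq_zero {g : ℝ → ℝ} {k m : ℕ}
    (hg : ContinuousOn (iteratedDerivWithin k g (Icc a b)) (Icc a b)) {S : Finset ℝ}
    (hcard : #S = m + 1) (hS : ↑S ⊆ Icc a b)
    (hzero : ∀ x ∈ S, iteratedDerivWithin k g (Icc a b) x = 0) :
    ∃ T : Finset ℝ, #T = m ∧ ↑T ⊆ Ioo a b ∧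
      ∀ y ∈ T, iteratedDerivWithin (k + 1) g (Icc a b) y = 0 := by
  obtain ⟨T, hcardT, hT, hzeroT⟩ := exists_finset_deriv_eq_zero hg hcard hS hzero
  refine ⟨T, hcardT, hT, fun y hy => ?_⟩
  rw [iteratedDerivWithin_succ, derivWithin_of_mem_nhds (Icc_mem_nhds (hT hy).1 (hT hy).2)]
  exact hzeroT y hy

theorem exists_iteratedDerivWithin_eq_zero_of_card_zeros (hab : a < b) {g : ℝ → ℝ} {k m : ℕ}
    (hg : ContDiffOn ℝ (k + m) g (Icc a b)) {S : Finset ℝ} (hcard : #S = m + 2)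
    (hS : ↑S ⊆ Icc a b) (hzero : ∀ x ∈ S, iteratedDerivWithin k g (Icc a b) x = 0) :
    ∃ ξ ∈ Ioo a b, iteratedDerivWithin (k + m + 1) g (Icc a b) ξ = 0 := by
  induction m generalizing k S with
  | zero =>
    obtain ⟨T, hcardT, hT, hzeroT⟩ := exists_finset_iteratedDerivWithin_succ_eq_zero
      (hg.continuousOn_iteratedDerivWithin (by simp) (uniqueDiffOn_Icc hab)) hcard hS hzero
    obtain ⟨ξ, rfl⟩ := card_eq_one.mp hcardT
    exact ⟨ξ, hT (mem_singleton_self ξ), hzeroT ξ (mem_singleton_self ξ)⟩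
  | succ m ih =>
    obtain ⟨T, hcardT, hT, hzeroT⟩ := exists_finset_iteratedDerivWithin_succ_eq_zero
      (hg.continuousOn_iteratedDerivWithin (by simp) (uniqueDiffOn_Icc hab)) hcard hS hzero
    have hg' : ContDiffOn ℝ (↑(k + 1) + ↑m) g (Icc a b) := by
      convert hg using 1; push_cast; ring
    obtain ⟨ξ, hξ, hξzero⟩ := ih hg' hcardT (hT.trans Ioo_subset_Icc_self) hzeroT
    exact ⟨ξ, hξ, by rwa [show k + (m + 1) + 1 = k + 1 + m + 1 by omega]⟩

theorem exists_iteratedDerivWithin_eq_zero_of_card_zeros_of_derivWithin_eq_zero {g : ℝ → ℝ}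
    {n : ℕ} (hn : 1 ≤ n) (hg : ContDiffOn ℝ n g (Icc a b)) {S : Finset ℝ} (hcard : #S = n)
    (hS : ↑S ⊆ Ico a b) (hzero : ∀ x ∈ insert b S, g x = 0)
    (hderiv : derivWithin g (Icc a b) b = 0) :
    ∃ ξ ∈ Ioo a b, iteratedDerivWithin (n + 1) g (Icc a b) ξ = 0 := by
  obtain ⟨m, rfl⟩ := Nat.exists_eq_add_of_le' hn
  obtain ⟨x, hx⟩ := card_pos.mp (by omega : 0 < #S)
  have hab : a < b := (hS hx).1.trans_lt (hS hx).2
  have hb : b ∉ S := fun h => (hS h).2.false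
  obtain ⟨T, hcardT, hT, hzeroT⟩ := exists_finset_iteratedDerivWithin_succ_eq_zero (k := 0)
    (by simpa using hg.continuousOn) (by rw [card_insert_of_notMem hb, hcard])
    (by
      rw [coe_insert]
      exact Set.insert_subset (Set.right_mem_Icc.mpr hab.le) (hS.trans Ico_subset_Icc_self))
    (by simpa using hzero)
  have hbT : b ∉ T := fun h => (hT h).2.false
  obtain ⟨ξ, hξ, hξzero⟩ := exists_iteratedDerivWithin_eq_zero_of_card_zeros hab (k := 1)
    (m := m) (hg.of_le (by push_cast; rw [add_comm])) (by rw [card_insert_of_notMem hbT, hcardT])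
    (by
      rw [coe_insert]
      exact Set.insert_subset (Set.right_mem_Icc.mpr hab.le) (hT.trans Ioo_subset_Icc_self))
    (by simpa [iteratedDerivWithin_one, hderiv] using hzeroT)
  exact ⟨ξ, hξ, by rwa [show m + 1 + 1 = 1 + m + 1 by omega]⟩

end Rolle

theorem iteratedDerivWithin_sub_eval {𝕜 : Type*} [NontriviallyNormedField 𝕜] {f : 𝕜 → 𝕜}
    {s : Set 𝕜} (hs : UniqueDiffOn 𝕜 s) {x : 𝕜} (hx : x ∈ s) {k : ℕ}
    (hf : ContDiffWithinAt 𝕜 k f s x) (q : 𝕜[X]) :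
    iteratedDerivWithin k (fun y => f y - q.eval y) s x =
      iteratedDerivWithin k f s x - (derivative^[k] q).eval x := by
  rw [← iteratedDerivWithin_eval q k hs hx]
  exact iteratedDerivWithin_sub hx hs hf (q.contDiff_eval k).contDiffWithinAt

open Lagrange in
theorem exists_derivWithin_sub_derivative_eval_eq {a b : ℝ} {n : ℕ} (hn : 1 ≤ n) {f : ℝ → ℝ}
    (hf : ContDiffOn ℝ (n + 1) f (Icc a b)) {S : Finset ℝ} (hcard : #S = n) (hS : ↑S ⊆ Ico a b)
    {p : ℝ[X]} (hdeg : p.degree ≤ n) (hp : ∀ x ∈ insert b S, p.eval x = f x) :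
    ∃ ξ ∈ Ioo a b, derivWithin f (Icc a b) b - (derivative p).eval b =
      iteratedDerivWithin (n + 1) f (Icc a b) ξ / (n + 1)! * ∏ x ∈ S, (b - x) := by
  obtain ⟨x₀, hx₀⟩ := card_pos.mp (by omega : 0 < #S)
  have hab : a < b := (hS hx₀).1.trans_lt (hS hx₀).2
  have hb : b ∉ S := fun h => (hS h).2.false
  have hs : UniqueDiffOn ℝ (Icc a b) := uniqueDiffOn_Icc hab
  have hb_mem : b ∈ Icc a b := right_mem_Icc.mpr hab.le
  have hW : ∏ x ∈ S, (b - x) ≠ 0 :=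
    prod_ne_zero_iff.mpr fun x hx => sub_ne_zero.mpr (hS hx).2.ne'
  set c := (derivWithin f (Icc a b) b - (derivative p).eval b) / ∏ x ∈ S, (b - x) with hc
  set r := p + Polynomial.C c * nodal (insert b S) id
  have hcard' : #(insert b S) = n + 1 := by rw [card_insert_of_notMem hb, hcard]
  have hr_iter : derivative^[n + 1] r = Polynomial.C (c * (n + 1)!) := by
    rw [iterate_map_add,
      iterate_derivative_eq_zero (Nat.lt_succ_of_le (natDegree_le_of_degree_le hdeg)),
      iterate_derivative_C_mul, ← hcard', iterate_derivative_nodal, zero_add, C_mul]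
  have hr_deriv : (derivative r).eval b = (derivative p).eval b + c * ∏ x ∈ S, (b - x) := by
    have hω : (derivative (nodal (insert b S) id)).eval b = ∏ x ∈ S, (b - x) :=
      eval_derivative_nodal_insert hb id
    simp [r, hω]
  have hg_zero : ∀ x ∈ insert b S, f x - r.eval x = 0 := by
    intro x hx
    have hω : (nodal (insert b S) id).eval x = 0 := eval_nodal_at_node (v := id) hx
    simp [r, hp x hx, hω]
  have hg_deriv : derivWithin (fun y => f y - r.eval y) (Icc a b) b = 0 := by
    rw [← iteratedDerivWithin_one,
      iteratedDerivWithin_sub_eval hs hb_mem ((hf.contDiffWithinAt hb_mem).of_le (by simp)),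
      iteratedDerivWithin_one, Function.iterate_one, hr_deriv, hc, div_mul_cancel₀ _ hW]
    ring
  obtain ⟨ξ, hξ, hξzero⟩ :=
    exists_iteratedDerivWithin_eq_zero_of_card_zeros_of_derivWithin_eq_zero hn
      ((hf.of_le (by simp)).sub (r.contDiff_eval _).contDiffOn) hcard hS hg_zero hg_deriv
  have hξ_mem : ξ ∈ Icc a b := Ioo_subset_Icc_self hξ
  rw [iteratedDerivWithin_sub_eval hs hξ_mem (hf ξ hξ_mem), hr_iter, eval_C, sub_eq_zero]
    at hξzero
  beta_reduce at hξzero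
  refine ⟨ξ, hξ, ?_⟩
  rw [hξzero, hc]
  field_simp

theorem injOn_cos_mul_pi_div (n : ℕ) : InjOn (fun j : ℕ => cos (j * π / n)) (Set.Iic n) := by
  intro i hi j hj hij
  have hmem {k : ℕ} (hk : k ∈ Set.Iic n) : (k : ℝ) * π / n ∈ Icc 0 π := by
    refine ⟨by positivity, div_le_of_le_mul₀ (by positivity) pi_pos.le ?_⟩
    rw [mul_comm]
    exact mul_le_mul_of_nonneg_left (by exact_mod_cast hk) pi_pos.le
  rcases n.eq_zero_or_pos with rfl | hn
  · simp_all
  have h := injOn_cos (hmem hi) (hmem hj) hij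
  field_simp at h
  exact_mod_cast h

/-- For `f` that is `(n+1)`-times continuously differentiable on `[−1,1]`
and `p` the polynomial of degree at most `n` interpolating `f` at the Chebyshev points
`x_j = cos(jπ/n)`, there is `ξ ∈ (−1,1)` with
`f'(1) − p'(1) = (f^{(n+1)}(ξ)/(n+1)!)·∏_{j=1}^n (1−x_j)`, and
`∏_{j=1}^n (1−x_j) = 2n/2^{n−1}`. -/
theorem stmt_14 (n : ℕ) (hn : 1 ≤ n) (f : ℝ → ℝ)
    (hf : ContDiffOn ℝ (n + 1) f (Set.Icc (-1 : ℝ) 1))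
    (p : Polynomial ℝ) (hdeg : p.degree ≤ n)
    (hinterp : ∀ j ≤ n, p.eval (Real.cos (j * Real.pi / n)) = f (Real.cos (j * Real.pi / n))) :
    ∃ ξ ∈ Set.Ioo (-1 : ℝ) 1,
      derivWithin f (Set.Icc (-1 : ℝ) 1) 1 - (Polynomial.derivative p).eval 1 =
        iteratedDerivWithin (n + 1) f (Set.Icc (-1 : ℝ) 1) ξ / ((n + 1).factorial : ℝ) *
          ∏ j ∈ Finset.Icc 1 n, (1 - Real.cos (j * Real.pi / n)) ∧
      ∏ j ∈ Finset.Icc 1 n, (1 - Real.cos (j * Real.pi / n)) = 2 * n / 2 ^ (n - 1) := by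
  have hinj : InjOn (fun j : ℕ => cos (j * π / n)) (Finset.Icc 1 n) :=
    (injOn_cos_mul_pi_div n).mono fun j hj => (Finset.mem_Icc.mp hj).2
  set S := (Finset.Icc 1 n).image fun j : ℕ => cos (j * π / n)
  have hcard : #S = n := by rw [card_image_of_injOn hinj, Nat.card_Icc, Nat.add_sub_cancel]
  have hS : ↑S ⊆ Ico (-1 : ℝ) 1 := by
    intro x hx
    obtain ⟨j, hj, rfl⟩ := Finset.mem_image.mp hx
    refine ⟨neg_one_le_cos _, (cos_le_one _).lt_of_ne fun h => ?_⟩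
    have hj0 : j = 0 := injOn_cos_mul_pi_div n (Finset.mem_Icc.mp hj).2
      (show 0 ∈ Set.Iic n from Nat.zero_le n) (by simpa using h)
    exact absurd (Finset.mem_Icc.mp hj).1 (by omega)
  have hp : ∀ x ∈ insert 1 S, p.eval x = f x := by
    intro x hx
    rcases Finset.mem_insert.mp hx with rfl | hx
    · simpa using hinterp 0 (Nat.zero_le n)
    · obtain ⟨j, hj, rfl⟩ := Finset.mem_image.mp hx
      exact hinterp j (Finset.mem_Icc.mp hj).2
  obtain ⟨ξ, hξ, herr⟩ := exists_derivWithin_sub_derivative_eval_eq hn hf hcard hS hdeg hp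
  rw [prod_image hinj] at herr
  exact ⟨ξ, hξ, herr, prod_one_sub_cos_mul_pi_div hn⟩
end

section
/- Let u ∈ (0,1) and let n be a positive integer. Set t = u^{−1/n} and α = 2/(t + 1/t) = 2t/(t²+1). Then 0 < α < 1 and ((1 − √(1 − α²))/α)^n = u. That is, α = 2/(t+1/t) with t = u^{−1/n} solves the Kosloff–Tal-Ezer balance equation for the mapping parameter. -/
/-- For `u ∈ (0,1)` and `n ≥ 1`, setting `t = u^{−1/n}` and
`α = 2/(t + 1/t)`, one has `0 < α < 1` and `((1 − √(1−α²))/α)^n = u`; i.e. this `α`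
solves the Kosloff–Tal-Ezer balance equation. -/
theorem stmt_15 (u : ℝ) (hu : 0 < u) (hu1 : u < 1) (n : ℕ) (hn : 1 ≤ n) :
    0 < 2 / (u ^ (-(1 : ℝ) / n) + 1 / u ^ (-(1 : ℝ) / n)) ∧
    2 / (u ^ (-(1 : ℝ) / n) + 1 / u ^ (-(1 : ℝ) / n)) < 1 ∧
    ((1 - Real.sqrt (1 - (2 / (u ^ (-(1 : ℝ) / n) + 1 / u ^ (-(1 : ℝ) / n))) ^ 2)) /
        (2 / (u ^ (-(1 : ℝ) / n) + 1 / u ^ (-(1 : ℝ) / n)))) ^ n = u := by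
  set t : ℝ := u ^ (-(1 : ℝ) / n) with htdef
  have hnR : (0 : ℝ) < n := by positivity
  have ht0 : 0 < t := Real.rpow_pos_of_pos hu _
  have ht1 : 1 < t := by
    rw [htdef]
    rw [Real.one_lt_rpow_iff_of_pos hu]
    right
    constructor
    · exact hu1
    · exact div_neg_of_neg_of_pos (by norm_num) hnR
  have hs : 2 < t + 1 / t := by
    have : (t - 1) ^ 2 / t > 0 := div_pos (pow_pos (sub_pos.mpr ht1) 2) ht0
    have ht : (t - 1) ^ 2 / t = t + 1 / t - 2 := by field_simp; ring
    linarith [ht ▸ this]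
  have hs0 : 0 < t + 1 / t := by linarith
  have hsne : t + 1 / t ≠ 0 := ne_of_gt hs0
  have htne : t ≠ 0 := ne_of_gt ht0
  refine ⟨by positivity, ?_, ?_⟩
  · rw [div_lt_one hs0]; linarith
  · have hsq : 1 - (2 / (t + 1 / t)) ^ 2 = ((t - 1 / t) / (t + 1 / t)) ^ 2 := by
      field_simp
      ring
    have hsqrt : Real.sqrt (1 - (2 / (t + 1 / t)) ^ 2) = (t - 1 / t) / (t + 1 / t) := by
      rw [hsq, Real.sqrt_sq]
      apply div_nonneg _ hs0.le
      rw [sub_nonneg, div_le_iff₀ ht0]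
      nlinarith
    rw [hsqrt]
    have hkey : (1 - (t - 1 / t) / (t + 1 / t)) / (2 / (t + 1 / t)) = 1 / t := by
      field_simp
      ring_nf
    rw [hkey]

    have h1t : 1 / t = u ^ ((1 : ℝ) / n) := by
      rw [htdef, one_div, ← Real.rpow_neg hu.le, neg_div, neg_neg]
    rw [h1t, ← Real.rpow_natCast (u ^ ((1:ℝ)/n)) n, ← Real.rpow_mul hu.le]
    rw [one_div, inv_mul_cancel₀ (by positivity), Real.rpow_one]
end

section
/- Let α ∈ (0,1) and define g(ξ) = arcsin(αξ)/arcsin(α) for ξ ∈ [−1,1], and let ρ = (1 − √(1 − α²))/α ∈ (0,1). Define the Chebyshev coefficients a_k = (2/π)·∫_0^π g(cos θ)·cos(kθ) dθ for integers k ≥ 1. Then there exists a constant C > 0 (depending on α) such that |a_k| ≤ C·k^{−3/2}·ρ^k for all k ≥ 1. -/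
/-!
Integrating by parts,
`∫₀^π arcsin (α cos θ) cos kθ dθ = (α / k) ∫₀^π sin θ sin kθ / √(1 - α² cos² θ) dθ`,
and for even `k` the integral vanishes by the symmetry `θ ↦ π - θ`. Since `α (1 + ρ²) = 2ρ`,
`1 - α² cos² θ = |1 - ρ² e^{2iθ}|² / (1 + ρ²)²`, and `|1 - z|⁻¹ = |(1 - z)^(-1/2)|²` expands as
`∑ cᵢ cₘ zⁱ z̄ᵐ` with `cₙ = binom(2n, n) / 4ⁿ`. For `k = 2j + 1` the weight `sin θ sin kθ` only sees
the frequencies `e^{±2ijθ}`, `e^{±2i(j+1)θ}`; these occur only in terms of total degree `n ≥ j`,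
at most four times per degree, with coefficients `≤ c_j ρ^{2n}`. Summing the geometric series gives
`|a_k| ≲ c_j ρ^k / k`, and `c_j ≤ (j + 1)^(-1/2)` supplies the remaining `k^(-1/2)`.
-/

noncomputable section
namespace KosloffTalEzer
open Finset Real intervalIntegral
open Complex (I)
open scoped Complex ComplexConjugate

/-- `invSqrtCoeff n = binom(2n, n) / 4ⁿ`, the Taylor coefficients of `(1 - z)^(-1/2)`. -/
def invSqrtCoeff : ℕ → ℝ
  | 0 => 1
  | n + 1 => invSqrtCoeff n * (2 * n + 1) / (2 * n + 2)

local notation "c" => invSqrtCoeff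

lemma invSqrtCoeff_pos (n : ℕ) : 0 < c n := by
  induction n with
  | zero => norm_num [invSqrtCoeff]
  | succ n ih => rw [invSqrtCoeff]; positivity

lemma invSqrtCoeff_antitone : Antitone c := by
  refine antitone_nat_of_succ_le fun n => ?_
  rw [invSqrtCoeff, div_le_iff₀ (by positivity)]
  nlinarith [invSqrtCoeff_pos n]

lemma invSqrtCoeff_le_one (n : ℕ) : c n ≤ 1 :=
  invSqrtCoeff_antitone (Nat.zero_le n)

lemma invSqrtCoeff_mul_le {j m n : ℕ} (h : j ≤ m ∨ j ≤ n) : c m * c n ≤ c j := by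
  rcases h with h | h
  · calc c m * c n ≤ c j * 1 :=
          mul_le_mul (invSqrtCoeff_antitone h) (invSqrtCoeff_le_one n)
            (invSqrtCoeff_pos n).le (invSqrtCoeff_pos j).le
      _ = c j := mul_one _
  · calc c m * c n ≤ 1 * c j :=
          mul_le_mul (invSqrtCoeff_le_one m) (invSqrtCoeff_antitone h)
            (invSqrtCoeff_pos n).le zero_le_one
      _ = c j := one_mul _

lemma sq_invSqrtCoeff_mul_le_one (n : ℕ) : c n ^ 2 * (n + 1) ≤ 1 := by
  induction n with
  | zero => norm_num [invSqrtCoeff]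
  | succ n ih =>
    have hfac : (2 * (n : ℝ) + 1) ^ 2 * (n + 2) ≤ (n + 1) * (2 * n + 2) ^ 2 := by nlinarith
    rw [invSqrtCoeff, div_pow, div_mul_eq_mul_div, div_le_one (by positivity)]
    push_cast
    calc (c n * (2 * n + 1)) ^ 2 * (n + 1 + 1)
        = c n ^ 2 * ((2 * n + 1) ^ 2 * (n + 2)) := by ring
      _ ≤ c n ^ 2 * ((n + 1) * (2 * n + 2) ^ 2) := by gcongr
      _ = c n ^ 2 * (n + 1) * (2 * n + 2) ^ 2 := by ring
      _ ≤ (2 * n + 2) ^ 2 := by nlinarith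

lemma invSqrtCoeff_le_inv_sqrt (n : ℕ) : c n ≤ 1 / √(n + 1) := by
  have hs : 0 < √((n : ℝ) + 1) := Real.sqrt_pos.2 (by positivity)
  rw [le_div_iff₀ hs]
  nlinarith [Real.sq_sqrt (show (0 : ℝ) ≤ n + 1 by positivity), sq_invSqrtCoeff_mul_le_one n,
    invSqrtCoeff_pos n]

lemma succ_mul_choose_succ {R : Type*} [Field R] [CharZero R] (r : R) (n : ℕ) :
    ((n : R) + 1) * Ring.choose (r + 1) (n + 1) = (r + 1) * Ring.choose r n := by
  have h : (descPochhammer ℤ (n + 1)).smeval (r + 1) = (r + 1) * (descPochhammer ℤ n).smeval r := by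
    rw [descPochhammer_succ_left, Polynomial.smeval_mul, Polynomial.smeval_comp,
      Polynomial.smeval_sub, Polynomial.smeval_X, Polynomial.smeval_one]
    simp
  rw [Ring.choose_eq_smul, Ring.choose_eq_smul, h, Nat.factorial_succ, smul_eq_mul, smul_eq_mul]
  push_cast
  field_simp

lemma invSqrtCoeff_eq_choose (n : ℕ) : (c n : ℂ) = Ring.choose ((1 / 2 : ℂ) + n - 1) n := by
  induction n with
  | zero => simp [invSqrtCoeff]
  | succ n ih =>
    have h := succ_mul_choose_succ ((1 / 2 : ℂ) + n - 1) n
    rw [← ih, show (1 / 2 : ℂ) + n - 1 + 1 = 1 / 2 + (n + 1 : ℕ) - 1 by push_cast; ring] at h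
    rw [eq_comm, ← mul_right_inj' (show (n : ℂ) + 1 ≠ 0 by exact_mod_cast n.succ_ne_zero), h,
      invSqrtCoeff]
    push_cast
    field_simp
    ring

lemma hasSum_invSqrtCoeff_mul_pow {z : ℂ} (hz : ‖z‖ < 1) :
    HasSum (fun n => (c n : ℂ) * z ^ n) (1 / (1 - z) ^ (1 / 2 : ℂ)) := by
  have h := (Complex.one_div_one_sub_cpow_hasFPowerSeriesOnBall_zero (1 / 2)).hasSum
    (y := z) (by
      rw [Metric.mem_eball, edist_zero_right, ← ofReal_norm]
      exact ENNReal.ofReal_lt_one.2 hz)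
  rw [zero_add] at h
  refine h.congr_fun fun n => ?_
  rw [FormalMultilinearSeries.ofScalars_apply_eq, smul_eq_mul, invSqrtCoeff_eq_choose, mul_comm]

lemma hasSum_cauchy_invSqrtCoeff {z : ℂ} (hz : ‖z‖ < 1) :
    HasSum (fun n => ∑ i ∈ range (n + 1), (c i : ℂ) * z ^ i * ((c (n - i) : ℂ) * conj z ^ (n - i)))
      (‖1 - z‖⁻¹ : ℝ) := by
  have hS := hasSum_invSqrtCoeff_mul_pow hz
  have hS' : HasSum (fun n => (c n : ℂ) * conj z ^ n) (conj (1 / (1 - z) ^ (1 / 2 : ℂ))) := by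
    simpa using Complex.hasSum_conj'.2 hS
  have hsummable : ∀ w : ℂ, ‖w‖ = ‖z‖ → Summable fun n => ‖(c n : ℂ) * w ^ n‖ := by
    intro w hw
    refine (summable_geometric_of_lt_one (norm_nonneg z) hz).of_nonneg_of_le
      (fun n => norm_nonneg _) fun n => ?_
    rw [norm_mul, norm_pow, hw, Complex.norm_real, Real.norm_of_nonneg (invSqrtCoeff_pos n).le]
    exact mul_le_of_le_one_left (by positivity) (invSqrtCoeff_le_one n)
  have h := hasSum_sum_range_mul_of_summable_norm (hsummable z rfl)
    (hsummable (conj z) (RCLike.norm_conj z))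
  have hnorm : ‖1 / (1 - z) ^ (1 / 2 : ℂ)‖ ^ 2 = ‖1 - z‖⁻¹ := by
    rw [norm_div, norm_one, show (1 / 2 : ℂ) = ((1 / 2 : ℝ) : ℂ) by push_cast; ring,
      Complex.norm_cpow_real, ← Real.sqrt_eq_rpow, one_div, inv_pow, Real.sq_sqrt (norm_nonneg _)]
  rwa [hS.tsum_eq, hS'.tsum_eq, Complex.mul_conj, Complex.normSq_eq_norm_sq, hnorm] at h

lemma mul_exp_pow_mul_conj_pow (q θ : ℝ) {i n : ℕ} (h : i ≤ n) :
    ((q : ℂ) * cexp (2 * θ * I)) ^ i * conj ((q : ℂ) * cexp (2 * θ * I)) ^ (n - i) =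
      (q : ℂ) ^ n * cexp (2 * ((2 * i - n : ℤ) : ℂ) * θ * I) := by
  have hconj : conj ((q : ℂ) * cexp (2 * θ * I)) = q * cexp (-(2 * θ * I)) := by
    rw [map_mul, Complex.conj_ofReal, ← Complex.exp_conj]
    simp [Complex.conj_ofReal, map_ofNat]
  rw [hconj, mul_pow, mul_pow, mul_mul_mul_comm, ← pow_add, Nat.add_sub_cancel' h,
    ← Complex.exp_nat_mul, ← Complex.exp_nat_mul, ← Complex.exp_add, Nat.cast_sub h]
  push_cast
  ring_nf

/-- The part of total degree `n` of `∑ cᵢ cₘ zⁱ z̄ᵐ = |1 - z|⁻¹` at `z = q e^{2iθ}`. -/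
def invNormTerm (q : ℝ) (n : ℕ) (θ : ℝ) : ℂ :=
  (q : ℂ) ^ n * ∑ i ∈ range (n + 1), ((c i * c (n - i) : ℝ) : ℂ) *
    cexp (2 * ((2 * i - n : ℤ) : ℂ) * θ * I)

lemma hasSum_invNormTerm {q : ℝ} (hq₀ : 0 ≤ q) (hq₁ : q < 1) (θ : ℝ) :
    HasSum (fun n => invNormTerm q n θ) (‖1 - q * cexp (2 * θ * I)‖⁻¹ : ℝ) := by
  have hz : ‖(q : ℂ) * cexp (2 * θ * I)‖ = q := by
    rw [norm_mul, Complex.norm_real, Real.norm_of_nonneg hq₀,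
      show (2 : ℂ) * θ * I = ((2 * θ : ℝ) : ℂ) * I by push_cast; ring,
      Complex.norm_exp_ofReal_mul_I, mul_one]
  refine (hasSum_cauchy_invSqrtCoeff (hz.trans_lt hq₁)).congr_fun fun n => ?_
  rw [invNormTerm, Finset.mul_sum]
  refine Finset.sum_congr rfl fun i hi => ?_
  rw [mul_mul_mul_comm, mul_exp_pow_mul_conj_pow q θ (Nat.lt_succ_iff.1 (mem_range.1 hi))]
  push_cast
  ring

lemma norm_invNormTerm_le {q : ℝ} (hq₀ : 0 ≤ q) (n : ℕ) (θ : ℝ) :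
    ‖invNormTerm q n θ‖ ≤ (n + 1) * q ^ n := by
  rw [invNormTerm, norm_mul, norm_pow, Complex.norm_real, Real.norm_of_nonneg hq₀, mul_comm]
  gcongr
  refine (norm_sum_le _ _).trans ?_
  calc ∑ i ∈ range (n + 1), ‖((c i * c (n - i) : ℝ) : ℂ) * cexp (2 * ((2 * i - n : ℤ) : ℂ) * θ * I)‖
      ≤ ∑ i ∈ range (n + 1), (1 : ℝ) := by
        refine Finset.sum_le_sum fun i _ => ?_
        rw [norm_mul, show (2 : ℂ) * ((2 * i - n : ℤ) : ℂ) * θ * I =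
            ((2 * (2 * i - n : ℤ) * θ : ℝ) : ℂ) * I by push_cast; ring,
          Complex.norm_exp_ofReal_mul_I, mul_one, Complex.norm_real,
          Real.norm_of_nonneg (mul_nonneg (invSqrtCoeff_pos _).le (invSqrtCoeff_pos _).le)]
        exact invSqrtCoeff_mul_le (Or.inl (Nat.zero_le i))
    _ = n + 1 := by simp

lemma norm_one_sub_sq_mul_exp {α ρ : ℝ} (hαρ : α * (1 + ρ ^ 2) = 2 * ρ) (θ : ℝ) :
    ‖1 - (ρ ^ 2 : ℝ) * cexp (2 * θ * I)‖ = (1 + ρ ^ 2) * √(1 - (α * cos θ) ^ 2) := by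
  have hw : ∀ q : ℝ, (1 : ℂ) - q * cexp (2 * θ * I) =
      ⟨1 - q * cos (2 * θ), -(q * sin (2 * θ))⟩ := fun q => by
    apply Complex.ext <;>
      simp [show (2 : ℂ) * θ * I = ((2 * θ : ℝ) : ℂ) * I by push_cast; ring,
        Complex.exp_ofReal_mul_I_re, Complex.exp_ofReal_mul_I_im]
  have hnormSq : Complex.normSq (1 - (ρ ^ 2 : ℝ) * cexp (2 * θ * I)) =
      ((1 + ρ ^ 2) ^ 2) * (1 - (α * cos θ) ^ 2) := by
    rw [hw, Complex.normSq_mk]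
    have hpyth := Real.sin_sq_add_cos_sq (2 * θ)
    have hcos := Real.cos_two_mul θ
    linear_combination ρ ^ 4 * hpyth - 2 * ρ ^ 2 * hcos +
      cos θ ^ 2 * (α * (1 + ρ ^ 2) + 2 * ρ) * hαρ
  rw [Complex.norm_def, hnormSq, Real.sqrt_mul (by positivity), Real.sqrt_sq (by positivity)]

lemma integral_exp_two_mul_int_mul_I {m : ℤ} (hm : m ≠ 0) :
    ∫ θ in (0 : ℝ)..π, cexp (2 * (m : ℂ) * θ * I) = 0 := by
  have hc : 2 * (m : ℂ) * I ≠ 0 := by simp [hm, Complex.I_ne_zero]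
  have hpt : ∀ θ : ℝ, cexp (2 * (m : ℂ) * θ * I) = cexp (2 * m * I * θ) := fun θ => by ring_nf
  simp_rw [hpt]
  rw [integral_exp_mul_complex hc, show 2 * (m : ℂ) * I * π = m * (2 * π * I) by ring,
    Complex.exp_int_mul_two_pi_mul_I]
  simp

lemma integral_cos_mul_exp_eq_zero (b : ℕ) {ℓ : ℤ} (h₁ : ℓ + b ≠ 0) (h₂ : ℓ - b ≠ 0) :
    ∫ θ in (0 : ℝ)..π, (cos (2 * b * θ) : ℂ) * cexp (2 * (ℓ : ℂ) * θ * I) = 0 := by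
  have hpt : ∀ θ : ℝ, (cos (2 * b * θ) : ℂ) * cexp (2 * (ℓ : ℂ) * θ * I) =
      (cexp (2 * ((ℓ + b : ℤ) : ℂ) * θ * I) + cexp (2 * ((ℓ - b : ℤ) : ℂ) * θ * I)) / 2 := by
    intro θ
    rw [Complex.ofReal_cos, Complex.cos, add_div, add_mul, div_mul_eq_mul_div,
      div_mul_eq_mul_div, ← Complex.exp_add, ← Complex.exp_add]
    push_cast
    ring_nf
  simp_rw [hpt]
  rw [integral_div, integral_add, integral_exp_two_mul_int_mul_I h₁,
    integral_exp_two_mul_int_mul_I h₂, add_zero, zero_div] <;>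
  exact Continuous.intervalIntegrable (by fun_prop) _ _

lemma sin_mul_sin_two_mul_add_one (j : ℕ) (θ : ℝ) :
    sin θ * sin ((2 * j + 1) * θ) = (cos (2 * j * θ) - cos (2 * (j + 1) * θ)) / 2 := by
  rw [Real.cos_sub_cos, show (2 * j * θ + 2 * (j + 1) * θ) / 2 = (2 * j + 1) * θ by ring,
    show (2 * j * θ - 2 * (j + 1) * θ) / 2 = -θ by ring, Real.sin_neg]
  ring

def sinSinSupport (j : ℕ) : Finset ℤ := {(j : ℤ), -(j : ℤ), (j : ℤ) + 1, -((j : ℤ) + 1)}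

lemma integral_sin_mul_sin_mul_exp_eq_zero (j : ℕ) {ℓ : ℤ} (hℓ : ℓ ∉ sinSinSupport j) :
    ∫ θ in (0 : ℝ)..π, ((sin θ * sin ((2 * j + 1) * θ) : ℝ) : ℂ) *
      cexp (2 * (ℓ : ℂ) * θ * I) = 0 := by
  simp only [sinSinSupport, Finset.mem_insert, Finset.mem_singleton, not_or] at hℓ
  have hpt : ∀ θ : ℝ, ((sin θ * sin ((2 * j + 1) * θ) : ℝ) : ℂ) *
      cexp (2 * (ℓ : ℂ) * θ * I) =
      ((cos (2 * j * θ) : ℂ) * cexp (2 * (ℓ : ℂ) * θ * I)) / 2 -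
        ((cos (2 * ((j + 1 : ℕ) : ℝ) * θ) : ℂ) * cexp (2 * (ℓ : ℂ) * θ * I)) / 2 := by
    intro θ
    rw [sin_mul_sin_two_mul_add_one]
    push_cast
    ring
  simp_rw [hpt]
  rw [integral_sub, integral_div, integral_div,
    integral_cos_mul_exp_eq_zero j (by omega) (by omega),
    integral_cos_mul_exp_eq_zero (j + 1) (by omega) (by omega), zero_div, sub_zero] <;>
  exact Continuous.intervalIntegrable (by fun_prop) _ _

lemma norm_integral_sin_mul_sin_mul_exp_le (j : ℕ) (ℓ : ℤ) :
    ‖∫ θ in (0 : ℝ)..π, ((sin θ * sin ((2 * j + 1) * θ) : ℝ) : ℂ) *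
      cexp (2 * (ℓ : ℂ) * θ * I)‖ ≤ π := by
  refine (intervalIntegral.norm_integral_le_of_norm_le_const fun θ _ => ?_).trans_eq
    (by rw [sub_zero, abs_of_pos Real.pi_pos, one_mul])
  rw [norm_mul, show (2 : ℂ) * ℓ * θ * I = ((2 * ℓ * θ : ℝ) : ℂ) * I by push_cast; ring,
    Complex.norm_exp_ofReal_mul_I, mul_one, Complex.norm_real, Real.norm_eq_abs, abs_mul]
  exact mul_le_one₀ (Real.abs_sin_le_one _) (abs_nonneg _) (Real.abs_sin_le_one _)

/-- Only the at most four `i` with `2i - n ∈ sinSinSupport j` contribute, and each of them has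
`max i (n - i) ≥ j`. -/
lemma sum_invSqrtCoeff_mul_le {f : ℤ → ℝ} {M : ℝ} {j : ℕ} (hf₀ : ∀ ℓ, 0 ≤ f ℓ)
    (hfM : ∀ ℓ, f ℓ ≤ M) (hsupp : ∀ ℓ ∉ sinSinSupport j, f ℓ = 0) (n : ℕ) :
    ∑ i ∈ range (n + 1), c i * c (n - i) * f (2 * i - n) ≤ if j ≤ n then 4 * M * c j else 0 := by
  set A := (range (n + 1)).filter fun i : ℕ => (2 * i - n : ℤ) ∈ sinSinSupport j
  have hA : ∀ i ∈ A, i ≤ n ∧ (j ≤ i ∨ j ≤ n - i) := by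
    intro i hi
    simp only [A, sinSinSupport, Finset.mem_filter, mem_range, Finset.mem_insert,
      Finset.mem_singleton] at hi
    omega
  rw [← Finset.sum_filter_of_ne fun i _ hne => by_contra fun h => hne (by rw [hsupp _ h, mul_zero])]
  change ∑ i ∈ A, _ ≤ _
  split_ifs with hjn
  · have hcard : A.card ≤ 4 := by
      refine (Finset.card_le_card_of_injOn (t := sinSinSupport j) (fun i : ℕ => (2 * i - n : ℤ))
        (fun i hi => ?_) fun i _ i' _ h => by simpa using h).trans Finset.card_le_four
      exact (Finset.mem_filter.1 hi).2
    have hM : 0 ≤ M * c j := mul_nonneg ((hf₀ 0).trans (hfM 0)) (invSqrtCoeff_pos j).le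
    calc ∑ i ∈ A, c i * c (n - i) * f (2 * i - n) ≤ ∑ _i ∈ A, M * c j := by
          refine Finset.sum_le_sum fun i hi => ?_
          rw [mul_comm M]
          exact mul_le_mul (invSqrtCoeff_mul_le (hA i hi).2) (hfM _) (hf₀ _)
            (invSqrtCoeff_pos j).le
      _ = A.card * (M * c j) := by rw [Finset.sum_const, nsmul_eq_mul]
      _ ≤ 4 * M * c j := by
          rw [mul_assoc]
          exact mul_le_mul_of_nonneg_right (by exact_mod_cast hcard) hM
  · have hempty : A = ∅ := Finset.eq_empty_of_forall_notMem fun i hi => by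
      have := hA i hi
      omega
    simp [hempty]

lemma continuous_invNormTerm (q : ℝ) (n : ℕ) : Continuous (invNormTerm q n) := by
  unfold invNormTerm
  fun_prop

lemma norm_integral_sin_mul_sin_mul_invNormTerm_le {q : ℝ} (hq₀ : 0 ≤ q) (j n : ℕ) :
    ‖∫ θ in (0 : ℝ)..π, ((sin θ * sin ((2 * j + 1) * θ) : ℝ) : ℂ) * invNormTerm q n θ‖ ≤
      if j ≤ n then 4 * π * c j * q ^ n else 0 := by
  set J : ℤ → ℂ := fun ℓ => ∫ θ in (0 : ℝ)..π,
    ((sin θ * sin ((2 * j + 1) * θ) : ℝ) : ℂ) * cexp (2 * (ℓ : ℂ) * θ * I)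
  have hexpand : ∫ θ in (0 : ℝ)..π,
      ((sin θ * sin ((2 * j + 1) * θ) : ℝ) : ℂ) * invNormTerm q n θ =
      (q : ℂ) ^ n * ∑ i ∈ range (n + 1), ((c i * c (n - i) : ℝ) : ℂ) * J (2 * i - n) := by
    rw [integral_congr (g := fun θ => ∑ i ∈ range (n + 1),
        ((q : ℂ) ^ n * ((c i * c (n - i) : ℝ) : ℂ)) *
          (((sin θ * sin ((2 * j + 1) * θ) : ℝ) : ℂ) *
            cexp (2 * ((2 * i - n : ℤ) : ℂ) * θ * I))) fun θ _ => by
        simp only [invNormTerm, Finset.mul_sum]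
        exact Finset.sum_congr rfl fun i _ => by ring,
      integral_finsetSum fun i _ => Continuous.intervalIntegrable (by fun_prop) _ _,
      Finset.mul_sum]
    exact Finset.sum_congr rfl fun i _ => by rw [integral_const_mul, mul_assoc]
  have hbound := sum_invSqrtCoeff_mul_le (j := j) (f := fun ℓ => ‖J ℓ‖) (fun _ => norm_nonneg _)
    (norm_integral_sin_mul_sin_mul_exp_le j)
    (fun ℓ hℓ => by rw [show J ℓ = 0 from integral_sin_mul_sin_mul_exp_eq_zero j hℓ, norm_zero]) n
  rw [hexpand, norm_mul, norm_pow, Complex.norm_real, Real.norm_of_nonneg hq₀]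
  calc q ^ n * ‖∑ i ∈ range (n + 1), ((c i * c (n - i) : ℝ) : ℂ) * J (2 * i - n)‖
      ≤ q ^ n * ∑ i ∈ range (n + 1), c i * c (n - i) * ‖J (2 * i - n)‖ := by
        gcongr
        refine (norm_sum_le _ _).trans_eq (Finset.sum_congr rfl fun i _ => ?_)
        rw [norm_mul, Complex.norm_real,
          Real.norm_of_nonneg (mul_nonneg (invSqrtCoeff_pos _).le (invSqrtCoeff_pos _).le)]
    _ ≤ q ^ n * (if j ≤ n then 4 * π * c j else 0) := by gcongr
    _ = if j ≤ n then 4 * π * c j * q ^ n else 0 := by split_ifs <;> ring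

lemma hasSum_ite_le_mul_pow {q : ℝ} (hq₀ : 0 ≤ q) (hq₁ : q < 1) (j : ℕ) (a : ℝ) :
    HasSum (fun n => if j ≤ n then a * q ^ n else 0) (a * q ^ j / (1 - q)) := by
  rw [← hasSum_nat_add_iff' j, Finset.sum_eq_zero fun i hi => if_neg (by simpa using hi),
    sub_zero]
  simp_rw [if_pos (Nat.le_add_left j _), pow_add, mul_comm (q ^ _) (q ^ j), ← mul_assoc]
  rw [div_eq_mul_inv]
  exact (hasSum_geometric_of_lt_one hq₀ hq₁).mul_left (a * q ^ j)

lemma abs_integral_sin_mul_sin_mul_inv_norm_le {q : ℝ} (hq₀ : 0 ≤ q) (hq₁ : q < 1) (j : ℕ) :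
    |∫ θ in (0 : ℝ)..π, sin θ * sin ((2 * j + 1) * θ) * ‖1 - q * cexp (2 * θ * I)‖⁻¹| ≤
      4 * π * c j * q ^ j / (1 - q) := by
  have hsum : HasSum
      (fun n => ∫ θ in (0 : ℝ)..π,
        ((sin θ * sin ((2 * j + 1) * θ) : ℝ) : ℂ) * invNormTerm q n θ)
      (∫ θ in (0 : ℝ)..π, ((sin θ * sin ((2 * j + 1) * θ) : ℝ) : ℂ) *
        ((‖1 - q * cexp (2 * θ * I)‖⁻¹ : ℝ) : ℂ)) := by
    refine hasSum_integral_of_dominated_convergence (fun n _ => (n + 1) * q ^ n)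
      (fun n => (Continuous.mul (by fun_prop) (continuous_invNormTerm q n)).aestronglyMeasurable)
      (fun n => MeasureTheory.ae_of_all _ fun θ _ => ?_)
      (MeasureTheory.ae_of_all _ fun θ _ => ?_) intervalIntegrable_const
      (MeasureTheory.ae_of_all _ fun θ _ => (hasSum_invNormTerm hq₀ hq₁ θ).mul_left _)
    · rw [norm_mul]
      refine (mul_le_of_le_one_left (norm_nonneg _) ?_).trans (norm_invNormTerm_le hq₀ n θ)
      rw [Complex.norm_real, Real.norm_eq_abs, abs_mul]
      exact mul_le_one₀ (Real.abs_sin_le_one _) (abs_nonneg _) (Real.abs_sin_le_one _)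
    · have := summable_pow_mul_geometric_of_norm_lt_one 1
        (by rwa [Real.norm_of_nonneg hq₀] : ‖q‖ < 1)
      simpa [add_mul] using this.add (summable_geometric_of_lt_one hq₀ hq₁)
  have hbound := hsum.norm_le_of_bounded (hasSum_ite_le_mul_pow hq₀ hq₁ j (4 * π * c j))
    (norm_integral_sin_mul_sin_mul_invNormTerm_le hq₀ j)
  simp_rw [← Complex.ofReal_mul] at hbound
  rwa [intervalIntegral.integral_ofReal, Complex.norm_real, Real.norm_eq_abs] at hbound

lemma one_sub_sq_mul_cos_pos {α : ℝ} (hα : |α| < 1) (θ : ℝ) : 0 < 1 - (α * cos θ) ^ 2 := by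
  have hα2 : α ^ 2 < 1 := (sq_lt_one_iff_abs_lt_one α).2 hα
  nlinarith [Real.cos_sq_le_one θ, sq_nonneg α]

lemma integral_arcsin_mul_cos_eq {α : ℝ} (hα : |α| < 1) {k : ℕ} (hk : k ≠ 0) :
    ∫ θ in (0 : ℝ)..π, arcsin (α * cos θ) * cos (k * θ) =
      α / k * ∫ θ in (0 : ℝ)..π, sin θ * sin (k * θ) / √(1 - (α * cos θ) ^ 2) := by
  have hk' : (k : ℝ) ≠ 0 := Nat.cast_ne_zero.2 hk
  have hsqrt : ∀ θ, √(1 - (α * cos θ) ^ 2) ≠ 0 := fun θ =>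
    (Real.sqrt_pos.2 (one_sub_sq_mul_cos_pos hα θ)).ne'
  have hu : ∀ θ ∈ Set.uIcc 0 π, HasDerivAt (fun θ => arcsin (α * cos θ))
      (-(α * sin θ) / √(1 - (α * cos θ) ^ 2)) θ := by
    intro θ _
    have hpos := one_sub_sq_mul_cos_pos hα θ
    have h := (Real.hasDerivAt_arcsin (by nlinarith) (by nlinarith)).comp θ
      ((Real.hasDerivAt_cos θ).const_mul α)
    exact h.congr_deriv (by field_simp)
  have hv : ∀ θ ∈ Set.uIcc 0 π, HasDerivAt (fun θ => sin (k * θ) / k) (cos (k * θ)) θ := by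
    intro θ _
    have h := ((Real.hasDerivAt_sin _).comp θ ((hasDerivAt_id θ).const_mul (k : ℝ))).div_const k
    exact h.congr_deriv (by simp [hk'])
  have hcont : Continuous fun θ => -(α * sin θ) / √(1 - (α * cos θ) ^ 2) :=
    Continuous.div (by fun_prop) (by fun_prop) hsqrt
  rw [integral_mul_deriv_eq_deriv_mul hu hv (hcont.intervalIntegrable _ _)
    (Continuous.intervalIntegrable (by fun_prop) _ _), ← integral_const_mul]
  simp only [Real.sin_nat_mul_pi, mul_zero, Real.sin_zero, zero_div, sub_zero, zero_sub,
    ← integral_neg]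
  refine integral_congr fun θ _ => ?_
  field_simp

lemma integral_arcsin_mul_cos_of_even (α : ℝ) {k : ℕ} (hk : Even k) :
    ∫ θ in (0 : ℝ)..π, arcsin (α * cos θ) * cos (k * θ) = 0 := by
  obtain ⟨m, rfl⟩ := hk
  have hreflect : ∀ θ, arcsin (α * cos (π - θ)) * cos (((m + m : ℕ) : ℝ) * (π - θ)) =
      -(arcsin (α * cos θ) * cos (((m + m : ℕ) : ℝ) * θ)) := by
    intro θ
    rw [Real.cos_pi_sub, mul_neg, Real.arcsin_neg, show ((m + m : ℕ) : ℝ) * (π - θ) =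
      m * (2 * π) - (m + m : ℕ) * θ by push_cast; ring, Real.cos_nat_mul_two_pi_sub]
    ring
  have h := integral_comp_sub_left
    (fun θ => arcsin (α * cos θ) * cos (((m + m : ℕ) : ℝ) * θ)) π (a := 0) (b := π)
  simp only [hreflect, integral_neg, sub_self, sub_zero] at h
  linarith

lemma invSqrtCoeff_div_le_rpow (j : ℕ) :
    c j / (2 * j + 1) ≤ 2 * ((2 * j + 1 : ℕ) : ℝ) ^ (-(3 : ℝ) / 2) := by
  have hk : (0 : ℝ) < 2 * j + 1 := by positivity
  have hsqrt : √(2 * (j : ℝ) + 1) ≤ 2 * √((j : ℝ) + 1) := by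
    refine Real.sqrt_le_iff.2 ⟨by positivity, ?_⟩
    rw [mul_pow, Real.sq_sqrt (by positivity)]
    linarith
  have hrpow : (2 * (j : ℝ) + 1) ^ (-(3 : ℝ) / 2) = ((2 * j + 1) * √(2 * j + 1))⁻¹ := by
    rw [show -(3 : ℝ) / 2 = -(1 + 1 / 2) by norm_num, Real.rpow_neg hk.le,
      Real.rpow_add hk, Real.rpow_one, ← Real.sqrt_eq_rpow]
  have hsqrt_pos : 0 < √((j : ℝ) + 1) := Real.sqrt_pos.2 (by positivity)
  push_cast
  rw [hrpow, div_le_iff₀ hk]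
  calc c j ≤ 1 / √(j + 1) := invSqrtCoeff_le_inv_sqrt j
    _ ≤ 2 / √(2 * j + 1) := by
        rw [div_le_div_iff₀ hsqrt_pos (Real.sqrt_pos.2 hk)]
        linarith
    _ = 2 * ((2 * j + 1) * √(2 * j + 1))⁻¹ * (2 * j + 1) := by
        field_simp

lemma abs_integral_arcsin_mul_cos_of_odd_le {α ρ : ℝ} (hα : |α| < 1) (hρ₀ : 0 ≤ ρ) (hρ₁ : ρ < 1)
    (hαρ : α * (1 + ρ ^ 2) = 2 * ρ) (j : ℕ) :
    |∫ θ in (0 : ℝ)..π, arcsin (α * cos θ) * cos (((2 * j + 1 : ℕ) : ℝ) * θ)| ≤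
      16 * π / (1 - ρ ^ 2) * ((2 * j + 1 : ℕ) : ℝ) ^ (-(3 : ℝ) / 2) * ρ ^ (2 * j + 1) := by
  have hq₁ : ρ ^ 2 < 1 := by nlinarith
  have hsplit : ∫ θ in (0 : ℝ)..π, sin θ * sin (((2 * j + 1 : ℕ) : ℝ) * θ) /
      √(1 - (α * cos θ) ^ 2) = (1 + ρ ^ 2) * ∫ θ in (0 : ℝ)..π,
        sin θ * sin ((2 * j + 1) * θ) * ‖1 - (ρ ^ 2 : ℝ) * cexp (2 * θ * I)‖⁻¹ := by
    rw [← integral_const_mul]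
    refine integral_congr fun θ _ => ?_
    have hsqrt := (Real.sqrt_pos.2 (one_sub_sq_mul_cos_pos hα θ)).ne'
    rw [norm_one_sub_sq_mul_exp hαρ]
    push_cast
    field_simp
  rw [integral_arcsin_mul_cos_eq hα (Nat.succ_ne_zero _), hsplit, ← mul_assoc, abs_mul,
    show α / ((2 * j + 1 : ℕ) : ℝ) * (1 + ρ ^ 2) = 2 * ρ / (2 * j + 1) by
      rw [← hαρ]; push_cast; ring,
    abs_of_nonneg (by positivity)]
  calc 2 * ρ / (2 * j + 1) * |∫ θ in (0 : ℝ)..π,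
        sin θ * sin ((2 * j + 1) * θ) * ‖1 - (ρ ^ 2 : ℝ) * cexp (2 * θ * I)‖⁻¹|
      ≤ 2 * ρ / (2 * j + 1) * (4 * π * c j * (ρ ^ 2) ^ j / (1 - ρ ^ 2)) := by
        gcongr
        exact abs_integral_sin_mul_sin_mul_inv_norm_le (by positivity) hq₁ j
    _ = 8 * π * ρ ^ (2 * j + 1) / (1 - ρ ^ 2) * (c j / (2 * j + 1)) := by
        rw [← pow_mul, pow_succ]
        ring
    _ ≤ 8 * π * ρ ^ (2 * j + 1) / (1 - ρ ^ 2) * (2 * ((2 * j + 1 : ℕ) : ℝ) ^ (-(3 : ℝ) / 2)) := by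
        have : 0 < 1 - ρ ^ 2 := by linarith
        gcongr
        exact invSqrtCoeff_div_le_rpow j
    _ = _ := by ring

lemma rho_pos_and_lt_one_and_mul_one_add_sq {α : ℝ} (h₀ : 0 < α) (h₁ : α < 1) :
    0 < (1 - √(1 - α ^ 2)) / α ∧ (1 - √(1 - α ^ 2)) / α < 1 ∧
      α * (1 + ((1 - √(1 - α ^ 2)) / α) ^ 2) = 2 * ((1 - √(1 - α ^ 2)) / α) := by
  have hpos : 0 < 1 - α ^ 2 := by nlinarith
  have hs2 := Real.sq_sqrt hpos.le
  have hs0 := Real.sqrt_pos.2 hpos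
  refine ⟨div_pos (by nlinarith) h₀, (div_lt_one h₀).2 (by nlinarith), ?_⟩
  field_simp
  linear_combination hs2

end KosloffTalEzer

open KosloffTalEzer
open scoped Real

/-- For the Kosloff–Tal-Ezer map `g(ξ) = arcsin(αξ)/arcsin α` with
`α ∈ (0,1)` and `ρ = (1 − √(1−α²))/α`, the Chebyshev coefficients
`a_k = (2/π)∫₀^π g(cos θ)cos(kθ)dθ` satisfy `|a_k| ≤ C·k^{−3/2}·ρ^k` for all `k ≥ 1`,
for some constant `C > 0` depending on `α`. -/
theorem stmt_16 (α : ℝ) (hα : α ∈ Set.Ioo (0 : ℝ) 1) :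
    ∃ C : ℝ, 0 < C ∧ ∀ k : ℕ, 1 ≤ k →
      |(2 / Real.pi) * ∫ θ in (0 : ℝ)..Real.pi,
          Real.arcsin (α * Real.cos θ) / Real.arcsin α * Real.cos (k * θ)| ≤
        C * (k : ℝ) ^ (-(3 : ℝ) / 2) * ((1 - Real.sqrt (1 - α ^ 2)) / α) ^ k := by
  obtain ⟨hα₀, hα₁⟩ := hα
  obtain ⟨hρ₀, hρ₁, hαρ⟩ := rho_pos_and_lt_one_and_mul_one_add_sq hα₀ hα₁
  set ρ := (1 - √(1 - α ^ 2)) / α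
  have hA : 0 < Real.arcsin α := Real.arcsin_pos.2 hα₀
  have hρ2 : 0 < 1 - ρ ^ 2 := by nlinarith
  refine ⟨32 / (Real.arcsin α * (1 - ρ ^ 2)), by positivity, fun k _ => ?_⟩
  simp_rw [div_mul_eq_mul_div _ (Real.arcsin α), intervalIntegral.integral_div, ← mul_div_assoc,
    abs_div, abs_mul, abs_of_pos hA, abs_of_pos (by positivity : (0 : ℝ) < 2 / Real.pi)]
  rcases Nat.even_or_odd' k with ⟨j, rfl | rfl⟩
  · rw [integral_arcsin_mul_cos_of_even α (even_two_mul j), abs_zero, mul_zero, zero_div]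
    positivity
  · calc 2 / π * |∫ θ in (0 : ℝ)..π, Real.arcsin (α * Real.cos θ) *
          Real.cos (((2 * j + 1 : ℕ) : ℝ) * θ)| / Real.arcsin α
        ≤ 2 / π * (16 * π / (1 - ρ ^ 2) * ((2 * j + 1 : ℕ) : ℝ) ^ (-(3 : ℝ) / 2) *
            ρ ^ (2 * j + 1)) / Real.arcsin α := by
          gcongr
          exact abs_integral_arcsin_mul_cos_of_odd_le (abs_lt.2 ⟨by linarith, hα₁⟩) hρ₀.le hρ₁
            hαρ j
      _ = _ := by
          field_simp
          ring
end
end
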